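/- arXiv:0804.2933 — 8 statements merged into one kernel-verified Lean document; each statement's English description precedes it below -/
import Mathlib

section
/- Let K be a field of characteristic 0, n ≥ 2, and let K[X,Y] = K[x_1,…,x_n,y_1,…,y_n] be the polynomial algebra. For α = (α_1,…,α_{n−1}) ∈ K^{n−1} with α ≠ 0, set w_α = (α_1x_1+⋯+α_{n−1}x_{n−1})y_n − (α_1y_1+⋯+α_{n−1}y_{n−1})x_n, and let φ_α be the K-algebra endomorphism of K[X,Y] fixing x_i, y_i for i = 1,…,n−1 and sending x_n ↦ α_1x_1+⋯+α_{n−1}x_{n−1}, y_n ↦ α_1y_1+⋯+α_{n−1}y_{n−1}. If f ∈ K[X,Y] is a nonzero polynomial which is homogeneous with respect to the total degree in x_n and y_n, and φ_α(f) = 0 for some nonzero α ∈ K^{n−1}, then w_α divides f in K[X,Y]. -/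
open MvPolynomial

/-- The K-algebra endomorphism `φ_α` of `K[x_1,…,x_{r+1},y_1,…,y_{r+1}]` which fixes
`x_i, y_i` for `i = 1,…,r` and sends `x_{r+1} ↦ Σ α_i x_i`, `y_{r+1} ↦ Σ α_i y_i`.
Here `x_i = X (Sum.inl i)` and `y_i = X (Sum.inr i)`. -/
noncomputable def phiAlpha (K : Type*) [CommSemiring K] (r : ℕ) (α : Fin r → K) :
    MvPolynomial (Fin (r + 1) ⊕ Fin (r + 1)) K →ₐ[K]
      MvPolynomial (Fin (r + 1) ⊕ Fin (r + 1)) K :=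
  aeval (Sum.elim
    (fun i => if (i : ℕ) < r then X (Sum.inl i)
      else ∑ j : Fin r, C (α j) * X (Sum.inl j.castSucc))
    (fun i => if (i : ℕ) < r then X (Sum.inr i)
      else ∑ j : Fin r, C (α j) * X (Sum.inr j.castSucc)))

/-- The polynomial `w_α = (Σ α_i x_i) y_{r+1} - (Σ α_i y_i) x_{r+1}`. -/
noncomputable def wAlpha (K : Type*) [CommRing K] (r : ℕ) (α : Fin r → K) :
    MvPolynomial (Fin (r + 1) ⊕ Fin (r + 1)) K :=
  (∑ j : Fin r, C (α j) * X (Sum.inl j.castSucc)) * X (Sum.inr (Fin.last r)) -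
    (∑ j : Fin r, C (α j) * X (Sum.inr j.castSucc)) * X (Sum.inl (Fin.last r))

/-!
Write `A = φ_α(x_n)` and `B = φ_α(y_n)`, so that `w_α = A y_n - B x_n`. Modulo `w_α` we have
`A y_n ≡ B x_n`, and homogeneity of degree `p` in `x_n, y_n` lets us scale both variables:
`A^p f = f(…, A x_n, A y_n) ≡ f(…, x_n A, x_n B) = x_n^p φ_α(f)`. Hence `w_α ∣ A^p f` when
`φ_α(f) = 0`. Finally `w_α` is irreducible, being linear in `y_n` with coefficients `A` and
`B x_n` that are coprime, and it does not divide `A`; so it divides `f`.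
-/

namespace MvPolynomial

theorem IsWeightedHomogeneous.aeval_pow_weight_mul {R S σ : Type*} [CommSemiring R]
    [CommSemiring S] [Algebra R S] {w : σ → ℕ} {f : MvPolynomial σ R} {m : ℕ}
    (hf : IsWeightedHomogeneous w f m) (t : S) (g : σ → S) :
    aeval (fun s => t ^ w s * g s) f = t ^ m * aeval g f := by
  conv_lhs => rw [f.as_sum]
  conv_rhs => rw [f.as_sum]
  simp only [map_sum, Finset.mul_sum]
  refine Finset.sum_congr rfl fun d hd => ?_
  rw [← hf (mem_support_iff.mp hd), aeval_monomial, aeval_monomial, Finsupp.weight_apply,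
    Finsupp.sum, Finsupp.prod, Finsupp.prod, ← Finset.prod_pow_eq_pow_sum]
  simp only [mul_pow, ← pow_mul, Finset.prod_mul_distrib, smul_eq_mul, mul_comm (w _)]
  ring

theorem algHom_apply_eq_aeval {R S σ : Type*} [CommSemiring R] [CommSemiring S] [Algebra R S]
    (ψ : MvPolynomial σ R →ₐ[R] S) (f : MvPolynomial σ R) : ψ f = aeval (fun s => ψ (X s)) f :=
  DFunLike.congr_fun (aeval_unique ψ) f

theorem not_dvd_of_eval_eq_zero {R σ : Type*} [CommSemiring R] {p q : MvPolynomial σ R}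
    (x : σ → R) (hp : eval x p = 0) (hq : eval x q ≠ 0) : ¬p ∣ q :=
  fun h => hq (zero_dvd_iff.mp (hp ▸ map_dvd (eval x) h))

noncomputable def linearForm {R σ ι : Type*} [CommSemiring R] [Fintype ι] (e : ι → σ)
    (c : ι → R) : MvPolynomial σ R :=
  ∑ j, C (c j) * X (e j)

section linearForm

variable {R σ ι : Type*} [Fintype ι] (e : ι → σ) (c : ι → R)

theorem eval_linearForm [CommSemiring R] (x : σ → R) :
    eval x (linearForm e c) = ∑ j, c j * x (e j) := by
  simp [linearForm]

theorem vars_linearForm_subset [CommSemiring R] [Nontrivial R] [DecidableEq σ] :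
    (linearForm e c).vars ⊆ Finset.univ.image e := by
  refine (vars_sum_subset _ _).trans (Finset.biUnion_subset.mpr fun j _ => ?_)
  refine (vars_mul _ _).trans (Finset.union_subset ?_ ?_)
  · simp [vars_C]
  · simp [vars_X]

theorem coeff_single_linearForm [CommSemiring R] (he : Function.Injective e) (k : ι) :
    coeff (Finsupp.single (e k) 1) (linearForm e c) = c k := by
  classical
  simp [linearForm, coeff_sum, coeff_X, Finsupp.single_left_inj, he.eq_iff]

theorem irreducible_linearForm [Field R] (he : Function.Injective e) (hc : c ≠ 0) :
    Irreducible (linearForm e c) := by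
  obtain ⟨k, hk⟩ := Function.ne_iff.mp hc
  have hcoeff := coeff_single_linearForm e c he k
  refine irreducible_of_totalDegree_eq_one (le_antisymm ?_ ?_) fun x hx => ?_
  · refine totalDegree_finsetSum_le fun j _ => (totalDegree_mul _ _).trans ?_
    simp [totalDegree_X]
  · simpa using le_totalDegree (s := Finsupp.single (e k) 1) (by simpa [hcoeff] using hk)
  · refine isUnit_iff_ne_zero.mpr fun hx0 => hk ?_
    simpa [hx0, hcoeff] using hx (Finsupp.single (e k) 1)

end linearForm

end MvPolynomial

open MvPolynomial

section phiAlpha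

variable (K : Type*) (r : ℕ) (α : Fin r → K)

noncomputable def linearFormX [CommSemiring K] : MvPolynomial (Fin (r + 1) ⊕ Fin (r + 1)) K :=
  linearForm (fun j : Fin r => Sum.inl j.castSucc) α

noncomputable def linearFormY [CommSemiring K] : MvPolynomial (Fin (r + 1) ⊕ Fin (r + 1)) K :=
  linearForm (fun j : Fin r => Sum.inr j.castSucc) α

theorem wAlpha_eq [CommRing K] : wAlpha K r α =
    linearFormX K r α * X (Sum.inr (Fin.last r)) - linearFormY K r α * X (Sum.inl (Fin.last r)) :=
  rfl

variable [CommSemiring K]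

@[simp] theorem phiAlpha_X_inl_last :
    phiAlpha K r α (X (Sum.inl (Fin.last r))) = linearFormX K r α := by
  simp [phiAlpha, linearFormX, linearForm]

@[simp] theorem phiAlpha_X_inr_last :
    phiAlpha K r α (X (Sum.inr (Fin.last r))) = linearFormY K r α := by
  simp [phiAlpha, linearFormY, linearForm]

@[simp] theorem phiAlpha_X_inl_castSucc (j : Fin r) :
    phiAlpha K r α (X (Sum.inl j.castSucc)) = X (Sum.inl j.castSucc) := by
  simp [phiAlpha]

@[simp] theorem phiAlpha_X_inr_castSucc (j : Fin r) :
    phiAlpha K r α (X (Sum.inr j.castSucc)) = X (Sum.inr j.castSucc) := by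
  simp [phiAlpha]

end phiAlpha

def lastPairWeight (r : ℕ) : Fin (r + 1) ⊕ Fin (r + 1) → ℕ :=
  Sum.elim (Pi.single (Fin.last r) 1) (Pi.single (Fin.last r) 1)

theorem weight_lastPairWeight {r : ℕ} (d : Fin (r + 1) ⊕ Fin (r + 1) →₀ ℕ) :
    Finsupp.weight (lastPairWeight r) d = d (Sum.inl (Fin.last r)) + d (Sum.inr (Fin.last r)) := by
  simp [Finsupp.weight_apply, Finsupp.sum_fintype, lastPairWeight, Fintype.sum_sum_type,
    Pi.single_apply]

theorem wAlpha_dvd_pow_mul_sub_pow_mul_phiAlpha {K : Type*} [CommRing K] {r : ℕ} (α : Fin r → K)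
    {f : MvPolynomial (Fin (r + 1) ⊕ Fin (r + 1)) K} {p : ℕ}
    (hf : IsWeightedHomogeneous (lastPairWeight r) f p) :
    wAlpha K r α ∣
      linearFormX K r α ^ p * f - X (Sum.inl (Fin.last r)) ^ p * phiAlpha K r α f := by
  rw [← Ideal.Quotient.eq_zero_iff_dvd, ← Ideal.Quotient.mkₐ_eq_mk K, map_sub, sub_eq_zero]
  set π := Ideal.Quotient.mkₐ K (Ideal.span {wAlpha K r α})
  have hw : π (linearFormX K r α) * π (X (Sum.inr (Fin.last r))) =
      π (X (Sum.inl (Fin.last r))) * π (linearFormY K r α) := by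
    rw [← map_mul, ← map_mul, ← sub_eq_zero, ← map_sub, mul_comm (X _), ← wAlpha_eq,
      Ideal.Quotient.mkₐ_eq_mk, Ideal.Quotient.eq_zero_iff_dvd]
  calc π (linearFormX K r α ^ p * f)
      = aeval (fun s => π (linearFormX K r α) ^ lastPairWeight r s * π (X s)) f := by
        rw [hf.aeval_pow_weight_mul, map_mul, map_pow, algHom_apply_eq_aeval π f]
    _ = aeval (fun s => π (X (Sum.inl (Fin.last r))) ^ lastPairWeight r s *
          (π.comp (phiAlpha K r α)) (X s)) f := by
        refine congrArg (fun g => aeval g f) (funext fun s => ?_)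
        rcases s with i | i <;> rcases Fin.eq_castSucc_or_eq_last i with ⟨j, rfl⟩ | rfl <;>
          simp [lastPairWeight, Fin.castSucc_ne_last, mul_comm, hw]
    _ = π (X (Sum.inl (Fin.last r)) ^ p * phiAlpha K r α f) := by
        rw [hf.aeval_pow_weight_mul, ← algHom_apply_eq_aeval, map_mul, map_pow]
        rfl

section wAlpha

variable {K : Type*} {r : ℕ} {α : Fin r → K}

theorem not_wAlpha_dvd_linearFormX [CommRing K] (hα : α ≠ 0) :
    ¬wAlpha K r α ∣ linearFormX K r α := by
  obtain ⟨k, hk⟩ := Function.ne_iff.mp hα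
  refine not_dvd_of_eval_eq_zero (Sum.elim (Pi.single k.castSucc 1) 0) ?_ ?_
  · simp [wAlpha_eq]
  · simpa [linearFormX, eval_linearForm, Pi.single_apply] using hk

theorem irreducible_wAlpha [Field K] (hα : α ≠ 0) : Irreducible (wAlpha K r α) := by
  obtain ⟨k, hk⟩ := Function.ne_iff.mp hα
  have hX : Irreducible (linearFormX K r α) :=
    irreducible_linearForm _ _ (fun i j h => by simpa using h) hα
  have hXY : ¬linearFormX K r α ∣ linearFormY K r α * X (Sum.inl (Fin.last r)) := by
    refine not_dvd_of_eval_eq_zero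
      (Sum.elim (Pi.single (Fin.last r) 1) (Pi.single k.castSucc 1)) ?_ ?_
    · simp [linearFormX, eval_linearForm, Fin.castSucc_ne_last]
    · simpa [linearFormY, eval_linearForm, Pi.single_apply] using hk
  rw [wAlpha_eq, sub_eq_add_neg]
  refine irreducible_mul_X_add _ _ _ hX.ne_zero ?_ ?_
    (hX.isRelPrime_iff_not_dvd.mpr hXY).neg_right
  · exact fun h => by simpa using vars_linearForm_subset _ _ h
  · intro h
    rcases Finset.mem_union.mp (vars_mul _ _ ((vars_neg _).subset h)) with h | h
    · simpa using vars_linearForm_subset _ _ h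
    · simp [vars_X] at h

end wAlpha

theorem divisibility_by_w_alpha_general {K : Type*} [Field K] (m : ℕ)
    (f : MvPolynomial (Fin (m + 2) ⊕ Fin (m + 2)) K)
    (hhom : ∃ p : ℕ, ∀ d ∈ f.support,
      d (Sum.inl (Fin.last (m + 1))) + d (Sum.inr (Fin.last (m + 1))) = p)
    (α : Fin (m + 1) → K) (hα : α ≠ 0)
    (h0 : phiAlpha K (m + 1) α f = 0) :
    wAlpha K (m + 1) α ∣ f := by
  obtain ⟨p, hp⟩ := hhom
  have hf : IsWeightedHomogeneous (lastPairWeight (m + 1)) f p := fun d hd =>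
    (weight_lastPairWeight d).trans (hp d (mem_support_iff.mpr hd))
  have hdvd : wAlpha K (m + 1) α ∣ linearFormX K (m + 1) α ^ p * f := by
    simpa [h0] using wAlpha_dvd_pow_mul_sub_pow_mul_phiAlpha α hf
  have hcop : IsRelPrime (wAlpha K (m + 1) α) (linearFormX K (m + 1) α ^ p) :=
    ((irreducible_wAlpha hα).isRelPrime_iff_not_dvd.mpr (not_wAlpha_dvd_linearFormX hα)).pow_right
  exact hcop.dvd_of_dvd_mul_left hdvd

/-- Lemma 1: if `f ≠ 0` is homogeneous with respect to the total degree in `x_n, y_n`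
(here `n = m + 2 ≥ 2`) and `φ_α(f) = 0` for some nonzero `α ∈ K^{n-1}`, then `w_α ∣ f`. -/
theorem divisibility_by_w_alpha {K : Type*} [Field K] [CharZero K] (m : ℕ)
    (f : MvPolynomial (Fin (m + 2) ⊕ Fin (m + 2)) K) (hf : f ≠ 0)
    (hhom : ∃ p : ℕ, ∀ d ∈ f.support,
      d (Sum.inl (Fin.last (m + 1))) + d (Sum.inr (Fin.last (m + 1))) = p)
    (α : Fin (m + 1) → K) (hα : α ≠ 0)
    (h0 : phiAlpha K (m + 1) α f = 0) :
    wAlpha K (m + 1) α ∣ f :=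
  divisibility_by_w_alpha_general m f hhom α hα h0
end

section
/- Let K be a field of characteristic 0, n > 2, and let f ∈ K[x_1,…,x_n,y_1,…,y_n] be homogeneous with respect to the total degree in x_n and y_n. If φ_α(f) = 0 for every nonzero α ∈ K^{n−1}, then f = 0. -/
open MvPolynomial

lemma eval_phiAlpha' {K : Type*} [CommSemiring K] {r : ℕ} (α : Fin r → K)
    (f : MvPolynomial (Fin (r+1) ⊕ Fin (r+1)) K) (w : Fin (r+1) ⊕ Fin (r+1) → K) :
    eval w (phiAlpha K r α f) =
      eval (Sum.elim
        (fun i : Fin (r+1) => if (i:ℕ) < r then w (Sum.inl i) else ∑ j : Fin r, α j * w (Sum.inl j.castSucc))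
        (fun i : Fin (r+1) => if (i:ℕ) < r then w (Sum.inr i) else ∑ j : Fin r, α j * w (Sum.inr j.castSucc))) f := by
  rw [phiAlpha, aeval_def, eval₂_comp_left (eval w)]
  simp only [eval, coe_eval₂Hom]
  congr 1
  · ext a; simp
  · funext i
    rcases i with i | i <;> simp only [Sum.elim_inl, Sum.elim_inr, Function.comp] <;>
      split <;> simp

lemma eval_congr_aux' {K : Type*} [CommSemiring K] {σ : Type*}
    (f : MvPolynomial σ K) (w w' : σ → K)
    (h : ∀ i, w i = w' i ∨ ∀ d ∈ f.support, d i = 0) :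
    eval w f = eval w' f := by
  rw [eval_eq, eval_eq]
  refine Finset.sum_congr rfl fun d hd => ?_
  congr 1
  refine Finset.prod_congr rfl fun i hi => ?_
  rcases h i with h1 | h2
  · rw [h1]
  · exact absurd (h2 d hd) (Finsupp.mem_support_iff.mp hi)

/-- Corollary (case `n > 2`, here `n = m + 3`): if `f` is homogeneous with respect to the
total degree in `x_n, y_n` and `φ_α(f) = 0` for every nonzero `α ∈ K^{n-1}`, then `f = 0`. -/
theorem vanishing_when_all_phi_alpha_vanish {K : Type*} [Field K] [CharZero K] (m : ℕ)
    (f : MvPolynomial (Fin (m + 3) ⊕ Fin (m + 3)) K)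
    (hhom : ∃ p : ℕ, ∀ d ∈ f.support,
      d (Sum.inl (Fin.last (m + 2))) + d (Sum.inr (Fin.last (m + 2))) = p)
    (h0 : ∀ α : Fin (m + 2) → K, α ≠ 0 → phiAlpha K (m + 2) α f = 0) :
    f = 0 := by
  obtain ⟨p, hp⟩ := hhom
  have hlast : ∀ i : Fin (m+3), ¬((i:ℕ) < m+2) → i = Fin.last (m+2) := by
    intro i hi
    have h2 := i.isLt
    apply Fin.ext
    simp only [Fin.val_last]
    omega
  have h10 : (1 : Fin (m+2)) ≠ 0 := by
    intro h
    have := congrArg Fin.val h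
    simp at this
  by_cases hp0 : p = 0
  · -- f does not involve the last variables
    subst hp0
    have hsupp : ∀ d ∈ f.support, d (Sum.inl (Fin.last (m + 2))) = 0 ∧
        d (Sum.inr (Fin.last (m + 2))) = 0 := by
      intro d hd
      have := hp d hd
      omega
    apply MvPolynomial.funext (q := 0)
    intro w
    rw [map_zero]
    have hα : (Pi.single (0 : Fin (m+2)) (1:K) : Fin (m+2) → K) ≠ 0 := by
      intro h
      have := congrFun h (0 : Fin (m+2))
      simp at this
    have h1 := congrArg (eval w) (h0 _ hα)
    rw [eval_phiAlpha', map_zero] at h1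
    rw [← h1]
    apply eval_congr_aux'
    intro i
    rcases i with i | i
    · by_cases hi : (i:ℕ) < m+2
      · left; simp [hi]
      · right
        rw [hlast i hi]
        exact fun d hd => (hsupp d hd).1
    · by_cases hi : (i:ℕ) < m+2
      · left; simp [hi]
      · right
        rw [hlast i hi]
        exact fun d hd => (hsupp d hd).2
  · -- p > 0
    set i0 : Fin (m+3) := Fin.castSucc 0 with hi0
    set i1 : Fin (m+3) := Fin.castSucc 1 with hi1
    have hne : i1 ≠ i0 := by
      simp only [hi0, hi1, ne_eq, Fin.castSucc_inj]
      exact h10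
    set D : MvPolynomial (Fin (m+3) ⊕ Fin (m+3)) K :=
      X (Sum.inl i0) * X (Sum.inr i1) - X (Sum.inl i1) * X (Sum.inr i0) with hD_def
    have hD : D ≠ 0 := by
      intro h
      have := congrArg (eval (fun j => if j = Sum.inl i0 ∨ j = Sum.inr i1 then (1:K) else 0)) h
      simp [hD_def, hne, Sum.inl.injEq, Sum.inr.injEq] at this
    have key : f * D = 0 := by
      apply MvPolynomial.funext (q := 0)
      intro w
      rw [map_zero, map_mul]
      by_cases hDw : eval w D = 0
      · rw [hDw, mul_zero]
      · suffices h : eval w f = 0 by rw [h, zero_mul]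
        set u0 := w (Sum.inl i0) with hu0
        set u1 := w (Sum.inl i1) with hu1
        set v0 := w (Sum.inr i0) with hv0
        set v1 := w (Sum.inr i1) with hv1
        set ul := w (Sum.inl (Fin.last (m+2))) with hul
        set vl := w (Sum.inr (Fin.last (m+2))) with hvl
        have hDv : u0 * v1 - u1 * v0 ≠ 0 := by
          simpa [hD_def] using hDw
        by_cases hz : ul = 0 ∧ vl = 0
        · -- direct: every monomial contains a last variable
          rw [eval_eq]
          apply Finset.sum_eq_zero
          intro d hd
          have hpd := hp d hd
          apply mul_eq_zero_of_right
          by_cases hdl : d (Sum.inl (Fin.last (m+2))) = 0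
          · have hdr : d (Sum.inr (Fin.last (m+2))) ≠ 0 := by omega
            refine Finset.prod_eq_zero (Finsupp.mem_support_iff.mpr hdr) ?_
            rw [← hvl, hz.2, zero_pow hdr]
          · refine Finset.prod_eq_zero (Finsupp.mem_support_iff.mpr hdl) ?_
            rw [← hul, hz.1, zero_pow hdl]
        · -- Cramer's rule
          set Dv := u0 * v1 - u1 * v0 with hDv_def
          set a := (ul * v1 - u1 * vl) / Dv with ha_def
          set b := (u0 * vl - ul * v0) / Dv with hb_def
          set α : Fin (m+2) → K := fun j => if j = 0 then a else if j = 1 then b else 0 with hα_def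
          have hsum : ∀ c : Fin (m+3) → K,
              ∑ j : Fin (m+2), α j * c (Fin.castSucc j) = a * c i0 + b * c i1 := by
            intro c
            rw [← Finset.sum_subset (Finset.subset_univ ({0, 1} : Finset (Fin (m+2))))]
            · rw [Finset.sum_pair h10.symm]
              simp [hα_def, h10, hi0, hi1]
            · intro x _ hx
              simp only [Finset.mem_insert, Finset.mem_singleton, not_or] at hx
              simp [hα_def, hx.1, hx.2]
          have hs1 : a * u0 + b * u1 = ul := by
            rw [ha_def, hb_def]
            field_simp
            ring
          have hs2 : a * v0 + b * v1 = vl := by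
            rw [ha_def, hb_def]
            field_simp
            ring
          have hαne : α ≠ 0 := by
            intro h
            have ha : a = 0 := by simpa [hα_def] using congrFun h (0 : Fin (m+2))
            have hb : b = 0 := by simpa [hα_def, h10] using congrFun h (1 : Fin (m+2))
            apply hz
            constructor
            · rw [← hs1, ha, hb]; ring
            · rw [← hs2, ha, hb]; ring
          have h1 := congrArg (eval w) (h0 α hαne)
          rw [eval_phiAlpha', map_zero] at h1
          rw [← h1]
          apply eval_congr_aux'
          intro i
          left
          rcases i with i | i
          · simp only [Sum.elim_inl]
            by_cases hi : (i:ℕ) < m+2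
            · rw [if_pos hi]
            · have hil := hlast i hi
              subst hil
              rw [if_neg hi]
              exact ((hsum fun t => w (Sum.inl t)).trans hs1).symm
          · simp only [Sum.elim_inr]
            by_cases hi : (i:ℕ) < m+2
            · rw [if_pos hi]
            · have hil := hlast i hi
              subst hil
              rw [if_neg hi]
              exact ((hsum fun t => w (Sum.inr t)).trans hs2).symm
    rcases mul_eq_zero.mp key with h | h
    · exact h
    · exact absurd h hD
end

section
/- Let K be a field of characteristic 0 and n = 2, and let f ∈ K[x_1,x_2,y_1,y_2] be homogeneous with respect to the total degree in x_2 and y_2. If φ_α(f) = 0 for every nonzero α ∈ K (where φ_α fixes x_1,y_1 and sends x_2 ↦ αx_1, y_2 ↦ αy_1), then f is divisible by u_{12} = x_1y_2 − x_2y_1. -/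
open MvPolynomial

/-- The K-algebra endomorphism `φ_α` of `K[x_1,x_2,y_1,y_2]` with
`φ_α(x_1) = x_1`, `φ_α(y_1) = y_1`, `φ_α(x_2) = α x_1`, `φ_α(y_2) = α y_1`.
Here `x_i = X (Sum.inl (i-1))` and `y_i = X (Sum.inr (i-1))`. -/
noncomputable def phiAlpha2 (K : Type*) [CommSemiring K] (α : K) :
    MvPolynomial (Fin 2 ⊕ Fin 2) K →ₐ[K] MvPolynomial (Fin 2 ⊕ Fin 2) K :=
  aeval (Sum.elim
    (fun i => if i = 0 then X (Sum.inl (0 : Fin 2)) else C α * X (Sum.inl (0 : Fin 2)))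
    (fun i => if i = 0 then X (Sum.inr (0 : Fin 2)) else C α * X (Sum.inr (0 : Fin 2))))

/-!
Homogeneity of degree `p` in `x₂, y₂` gives `f(x₁, x₁x₂, y₁, x₁y₂) = x₁ ^ p f` and
`f(x₁, x₂x₁, y₁, x₂y₁) = x₂ ^ p φ₁(f) = 0`. The two substitutions differ only in `y₂ ↦ x₁y₂`
versus `y₂ ↦ x₂y₁`, which agree modulo `u₁₂`. Hence `u₁₂ ∣ x₁ ^ p f`, and `u₁₂` is irreducible
and does not divide `x₁`.
-/

namespace MvPolynomial

variable {R S σ : Type*} [CommSemiring R]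

theorem dvd_aeval_sub_aeval [CommRing S] [Algebra R S] {a : S} {g h : σ → S}
    (hgh : ∀ i, a ∣ g i - h i) (f : MvPolynomial σ R) : a ∣ aeval g f - aeval h f := by
  simp_rw [← Ideal.mem_span_singleton, ← Ideal.Quotient.eq, ← Ideal.Quotient.mkₐ_eq_mk R,
    ← AlgHom.comp_apply, comp_aeval] at hgh ⊢
  simp only [hgh]

theorem IsWeightedHomogeneous.aeval_pow_mul [CommSemiring S] [Algebra R S] {w : σ → ℕ}
    {f : MvPolynomial σ R} {p : ℕ} (hf : f.IsWeightedHomogeneous w p) (g : σ → S) (t : S) :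
    aeval (fun i ↦ t ^ w i * g i) f = t ^ p * aeval g f := by
  induction hf using IsWeightedHomogeneous.induction_on with
  | zero => simp
  | add p q _ _ hp hq => rw [map_add, map_add, hp, hq, mul_add]
  | monomial d r hd =>
    have hpow : (d.prod fun i k ↦ (t ^ w i) ^ k) = t ^ d.sum fun i k ↦ k • w i := by
      simp only [Finsupp.prod, Finsupp.sum, ← pow_mul, smul_eq_mul, mul_comm,
        Finset.prod_pow_eq_pow_sum]
    rw [aeval_monomial, aeval_monomial, ← hd, Finsupp.weight_apply, ← hpow]
    simp only [mul_pow, Finsupp.prod_mul]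
    ring

end MvPolynomial

/-- The paper's `u_{ij} = x_i y_j - x_j y_i`. -/
noncomputable def xyMinor (R : Type*) [CommRing R] {ι : Type*} (i j : ι) :
    MvPolynomial (ι ⊕ ι) R :=
  X (.inl i) * X (.inr j) - X (.inl j) * X (.inr i)

section xyMinor

variable {R ι : Type*} [CommRing R] [IsDomain R]

theorem irreducible_xyMinor {i j : ι} (hij : i ≠ j) : Irreducible (xyMinor R i j) := by
  classical
  rw [xyMinor, sub_eq_add_neg]
  refine irreducible_mul_X_add _ _ _ (X_ne_zero _) (by simp) (fun h ↦ ?_) ?_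
  · rw [vars_neg] at h
    simpa [hij.symm] using vars_mul _ _ h
  · refine X_prime.irreducible.isRelPrime_iff_not_dvd.2 fun h ↦ ?_
    rw [dvd_neg] at h
    rcases X_prime.dvd_or_dvd h with h | h <;> simp [X_dvd_X, hij] at h

theorem xyMinor_not_dvd_X_inl (i j : ι) : ¬ xyMinor R i j ∣ X (.inl i) := by
  rintro ⟨c, hc⟩
  simpa [xyMinor] using congrArg (eval (Sum.elim 1 0)) hc

end xyMinor

theorem u12_divides_when_all_phi_alpha_vanish_general {K : Type*} [Field K]
    (f : MvPolynomial (Fin 2 ⊕ Fin 2) K)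
    (hhom : ∃ p : ℕ, ∀ d ∈ f.support,
      d (Sum.inl (1 : Fin 2)) + d (Sum.inr (1 : Fin 2)) = p)
    (h0 : ∀ α : K, α ≠ 0 → phiAlpha2 K α f = 0) :
    (X (Sum.inl (0 : Fin 2)) * X (Sum.inr (1 : Fin 2)) -
      X (Sum.inl (1 : Fin 2)) * X (Sum.inr (0 : Fin 2))) ∣ f := by
  obtain ⟨p, hp⟩ := hhom
  let w : Fin 2 ⊕ Fin 2 → ℕ := Sum.elim Fin.val Fin.val
  have hf : f.IsWeightedHomogeneous w p := fun d hd ↦ by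
    simpa [Finsupp.weight_eq_sum, w] using hp d (mem_support_iff.2 hd)
  have hsubst : xyMinor K (0 : Fin 2) 1 ∣
      aeval (fun i ↦ X (.inl 0) ^ w i * X i) f -
        aeval (fun i ↦ X (.inl 1) ^ w i * phiAlpha2 K 1 (X i)) f :=
    dvd_aeval_sub_aeval (by rintro (i | i) <;> fin_cases i <;>
      simp [w, phiAlpha2, xyMinor, mul_comm]) f
  have hφ : aeval (fun i ↦ phiAlpha2 K 1 (X i)) f = 0 := by
    rw [← comp_aeval, aeval_X_left, AlgHom.comp_id, h0 1 one_ne_zero]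
  rw [hf.aeval_pow_mul, hf.aeval_pow_mul, aeval_X_left_apply, hφ, mul_zero, sub_zero] at hsubst
  have hu : Prime (xyMinor K (0 : Fin 2) 1) := (irreducible_xyMinor (by decide)).prime
  exact (hu.dvd_or_dvd hsubst).resolve_left fun h ↦
    xyMinor_not_dvd_X_inl 0 1 (hu.dvd_of_dvd_pow h)

/-- Corollary (case `n = 2`): if `f ∈ K[x_1,x_2,y_1,y_2]` is homogeneous with respect to the
total degree in `x_2, y_2` and `φ_α(f) = 0` for every nonzero `α ∈ K`, then
`u_{12} = x_1 y_2 - x_2 y_1` divides `f`. -/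
theorem u12_divides_when_all_phi_alpha_vanish {K : Type*} [Field K] [CharZero K]
    (f : MvPolynomial (Fin 2 ⊕ Fin 2) K)
    (hhom : ∃ p : ℕ, ∀ d ∈ f.support,
      d (Sum.inl (1 : Fin 2)) + d (Sum.inr (1 : Fin 2)) = p)
    (h0 : ∀ α : K, α ≠ 0 → phiAlpha2 K α f = 0) :
    (X (Sum.inl (0 : Fin 2)) * X (Sum.inr (1 : Fin 2)) -
      X (Sum.inl (1 : Fin 2)) * X (Sum.inr (0 : Fin 2))) ∣ f :=
  u12_divides_when_all_phi_alpha_vanish_general f hhom h0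
end

section
/- Let K be a field of characteristic 0. In K[X,Y] = K[x_1,…,x_n,y_1,…,y_n] with u_{jk} = x_jy_k − x_ky_j, the set of all products x_{i_1}⋯x_{i_c}·u_{j_1k_1}⋯u_{j_dk_d} such that no two factors u_{j_pk_p}, u_{j_qk_q} intersect each other (no p,q with j_p < j_q < k_p < k_q) and no factor u_{j_pk_p} covers an x_{i_t} (no p,t with j_p < i_t < k_p) is linearly independent over K. -/
open MvPolynomial

/-- The set of "normal" products `x_{i_1} ⋯ x_{i_c} u_{j_1 k_1} ⋯ u_{j_d k_d}`
(with `u_{jk} = x_j y_k - x_k y_j`, `j < k`, `x_i = X (Sum.inl i)`, `y_i = X (Sum.inr i)`)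
such that no two factors `u_{j_p k_p}`, `u_{j_q k_q}` intersect each other
(no `p, q` with `j_p < j_q < k_p < k_q`) and no factor `u_{j_p k_p}` covers an `x_{i_t}`
(no `p, t` with `j_p < i_t < k_p`). -/
def normalProducts (K : Type*) [CommRing K] (n : ℕ) :
    Set (MvPolynomial (Fin n ⊕ Fin n) K) :=
  {w | ∃ (c d : ℕ) (idx : Fin c → Fin n) (jk : Fin d → Fin n × Fin n),
    (∀ p, (jk p).1 < (jk p).2) ∧
    (∀ p q, ¬((jk p).1 < (jk q).1 ∧ (jk q).1 < (jk p).2 ∧ (jk p).2 < (jk q).2)) ∧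
    (∀ p t, ¬((jk p).1 < idx t ∧ idx t < (jk p).2)) ∧
    w = (∏ t, X (Sum.inl (idx t))) *
      ∏ p, (X (Sum.inl (jk p).1) * X (Sum.inr (jk p).2) -
        X (Sum.inl (jk p).2) * X (Sum.inr (jk p).1))}

/-!
With respect to the lexicographic order with `x_0 ≻ ⋯ ≻ x_{n-1} ≻ y_0 ≻ ⋯ ≻ y_{n-1}`, the
leading monomial of `u_{jk}` (`j < k`) is `x_j y_k`, so the leading monomial of a product
`x_{i_1} ⋯ x_{i_c} u_{j_1 k_1} ⋯ u_{j_d k_d}` records the multiset `{i_t} + {j_p}` of `x`-indices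
and the multiset `{k_p}` of `y`-indices. For a normal product these two multisets determine the
factors: the smallest `y`-index `k` must be paired with the largest `x`-index below `k`, since any
`x`-index strictly between the ends of the pair would be covered or would open an interval
crossing it; removing that pair and recursing recovers all the factors. Hence distinct normal
products have distinct leading monomials, and polynomials with distinct leading monomials are
linearly independent.
-/

theorem Multiset.map_inl_add_map_inr_inj {α β : Type*} {A₁ A₂ : Multiset α}
    {B₁ B₂ : Multiset β} :
    A₁.map Sum.inl + B₁.map Sum.inr = A₂.map Sum.inl + B₂.map Sum.inr ↔ A₁ = A₂ ∧ B₁ = B₂ := by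
  classical
  refine ⟨fun h => ⟨Multiset.ext.mpr fun a => ?_, Multiset.ext.mpr fun b => ?_⟩,
    fun ⟨hA, hB⟩ => hA ▸ hB ▸ rfl⟩
  · simpa [Multiset.count_map_eq_count' _ _ Sum.inl_injective] using
      congrArg (Multiset.count (Sum.inl a)) h
  · simpa [Multiset.count_map_eq_count' _ _ Sum.inr_injective] using
      congrArg (Multiset.count (Sum.inr b)) h

theorem Multiset.sum_map_single_one {α : Type*} [DecidableEq α] (s : Multiset α) :
    (s.map fun a => Finsupp.single a 1).sum = Multiset.toFinsupp s := by
  induction s using Multiset.induction_on with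
  | empty => simp
  | cons a s ih =>
    rw [Multiset.map_cons, Multiset.sum_cons, ih, ← Multiset.singleton_add,
      Multiset.toFinsupp_add, Multiset.toFinsupp_singleton]

namespace MonomialOrder

open scoped MonomialOrder

variable {σ τ R : Type*} [CommRing R]

noncomputable def comapEquiv (m : MonomialOrder τ) (e : σ ≃ τ) : MonomialOrder σ where
  syn := m.syn
  toSyn := (Finsupp.domCongr e).trans m.toSyn
  toSyn_monotone _ _ h := m.toSyn_monotone (Finsupp.le_def.mpr fun _ => Finsupp.le_def.mp h _)
  wellFoundedLT_syn := m.wellFoundedLT_syn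

theorem comapEquiv_lt_iff (m : MonomialOrder τ) (e : σ ≃ τ) {c d : σ →₀ ℕ} :
    c ≺[m.comapEquiv e] d ↔ Finsupp.domCongr e c ≺[m] Finsupp.domCongr e d := Iff.rfl

variable (m : MonomialOrder σ)

theorem degree_X_mul_X [IsDomain R] (a b : σ) :
    m.degree (X a * X b : MvPolynomial σ R) = Finsupp.single a 1 + Finsupp.single b 1 := by
  rw [m.degree_mul (X_ne_zero a) (X_ne_zero b), m.degree_X, m.degree_X]

theorem degree_multiset_prod [IsDomain R] (s : Multiset (MvPolynomial σ R)) (hs : 0 ∉ s) :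
    m.degree s.prod = (s.map m.degree).sum := by
  induction s using Multiset.induction_on with
  | empty => simp
  | cons f s ih =>
    rw [Multiset.mem_cons, not_or] at hs
    rw [Multiset.prod_cons, m.degree_mul (Ne.symm hs.1) (Multiset.prod_ne_zero hs.2),
      ih hs.2, Multiset.map_cons, Multiset.sum_cons]

theorem linearIndependent_of_injective_degree [NoZeroDivisors R] {ι : Type*}
    {v : ι → MvPolynomial σ R} (hv : ∀ i, v i ≠ 0) (hinj : Function.Injective (m.degree ∘ v)) :
    LinearIndependent R v := by
  classical
  rw [linearIndependent_iff']
  intro s g hsum i hi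
  by_contra hgi
  obtain ⟨j, hj, hj_max⟩ := (s.filter (g · ≠ 0)).exists_max_image (m.toSyn ∘ m.degree ∘ v)
    ⟨i, Finset.mem_filter.mpr ⟨hi, hgi⟩⟩
  rw [Finset.mem_filter] at hj
  have hcoeff := congrArg (coeff (m.degree (v j))) hsum
  rw [coeff_sum, Finset.sum_eq_single j, coeff_zero, coeff_smul, smul_eq_mul] at hcoeff
  · exact mul_ne_zero hj.2 (m.coeff_degree_ne_zero_iff.mpr (hv j)) hcoeff
  · intro k hk hkj
    by_cases hgk : g k = 0
    · rw [hgk, zero_smul, coeff_zero]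
    · rw [coeff_smul, m.coeff_eq_zero_of_lt, smul_zero]
      exact (hj_max k (Finset.mem_filter.mpr ⟨hk, hgk⟩)).lt_of_ne
        (m.toSyn.injective.ne (hinj.ne hkj))
  · exact fun h => absurd hj.1 h

end MonomialOrder

namespace NormalProducts

open Sum Finsupp

section Combinatorics

variable {α : Type*} [LinearOrder α]

structure IsNormal (F : Multiset α) (P : Multiset (α × α)) : Prop where
  lt : ∀ p ∈ P, p.1 < p.2
  not_crossing : ∀ p ∈ P, ∀ q ∈ P, ¬(p.1 < q.1 ∧ q.1 < p.2 ∧ p.2 < q.2)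
  not_covers : ∀ p ∈ P, ∀ i ∈ F, ¬(p.1 < i ∧ i < p.2)

variable {F F₁ F₂ : Multiset α} {P P₁ P₂ : Multiset (α × α)}

theorem IsNormal.of_cons {p : α × α} (h : IsNormal F (p ::ₘ P)) : IsNormal F P where
  lt q hq := h.lt q (Multiset.mem_cons_of_mem hq)
  not_crossing q hq r hr :=
    h.not_crossing q (Multiset.mem_cons_of_mem hq) r (Multiset.mem_cons_of_mem hr)
  not_covers q hq := h.not_covers q (Multiset.mem_cons_of_mem hq)

theorem IsNormal.mk_mem (h : IsNormal F P) {m k : α}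
    (hk : k ∈ P.map Prod.snd) (hk_min : ∀ k' ∈ P.map Prod.snd, k ≤ k')
    (hm : m ∈ F + P.map Prod.fst) (hmk : m < k)
    (hm_max : ∀ a ∈ F + P.map Prod.fst, a < k → a ≤ m) :
    (m, k) ∈ P := by
  obtain ⟨⟨j, k⟩, hp, rfl⟩ := Multiset.mem_map.mp hk
  obtain hjm | rfl := (hm_max j (Multiset.mem_add.mpr (.inr (Multiset.mem_map_of_mem _ hp)))
    (h.lt _ hp)).lt_or_eq
  · rcases Multiset.mem_add.mp hm with hF | hP
    · exact absurd ⟨hjm, hmk⟩ (h.not_covers _ hp m hF)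
    · obtain ⟨⟨m, k'⟩, hq, rfl⟩ := Multiset.mem_map.mp hP
      obtain rfl | hkk' := (hk_min k' (Multiset.mem_map_of_mem _ hq)).eq_or_lt
      · exact hq
      · exact absurd ⟨hjm, hmk, hkk'⟩ (h.not_crossing _ hp _ hq)
  · exact hp

theorem IsNormal.unique (h₁ : IsNormal F₁ P₁) (h₂ : IsNormal F₂ P₂)
    (hfst : F₁ + P₁.map Prod.fst = F₂ + P₂.map Prod.fst)
    (hsnd : P₁.map Prod.snd = P₂.map Prod.snd) :
    F₁ = F₂ ∧ P₁ = P₂ := by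
  induction P₁ using Multiset.strongInductionOn generalizing P₂ with
  | ih P₁ ih =>
    rcases eq_or_ne P₁ 0 with rfl | hP₁
    · obtain rfl : P₂ = 0 := by simpa [eq_comm] using hsnd
      simpa using hfst
    obtain ⟨k, hk, hk_min⟩ :=
      Multiset.exists_min_image id (by simpa using hP₁ : P₁.map Prod.snd ≠ 0)
    obtain ⟨p, hp, rfl⟩ := Multiset.mem_map.mp hk
    have hbelow : p.1 ∈ (F₁ + P₁.map Prod.fst).filter (· < p.2) := Multiset.mem_filter.mpr
      ⟨Multiset.mem_add.mpr (.inr (Multiset.mem_map_of_mem _ hp)), h₁.lt p hp⟩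
    obtain ⟨m, hm, hm_max⟩ := Multiset.exists_max_image id
      (s := (F₁ + P₁.map Prod.fst).filter (· < p.2)) fun h => Multiset.notMem_zero _ (h ▸ hbelow)
    simp only [Multiset.mem_filter, id] at hm hm_max hk_min
    have hmk₁ := h₁.mk_mem hk hk_min hm.1 hm.2 fun a ha hak => hm_max a ⟨ha, hak⟩
    -- the pivot `(m, p.2)` depends only on the two multisets, so it lies in `P₂` as well
    rw [hfst] at hm hm_max
    rw [hsnd] at hk hk_min
    have hmk₂ := h₂.mk_mem hk hk_min hm.1 hm.2 fun a ha hak => hm_max a ⟨ha, hak⟩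
    obtain ⟨P₁, rfl⟩ := Multiset.exists_cons_of_mem hmk₁
    obtain ⟨P₂, rfl⟩ := Multiset.exists_cons_of_mem hmk₂
    simp only [Multiset.map_cons, Multiset.add_cons, Multiset.cons_inj_right] at hfst hsnd
    obtain ⟨rfl, rfl⟩ := ih P₁ (Multiset.lt_cons_self _ _) h₁.of_cons h₂.of_cons hfst hsnd
    exact ⟨rfl, rfl⟩

end Combinatorics

variable {R : Type*} [CommRing R]

noncomputable def u {ι : Type*} (j k : ι) : MvPolynomial (ι ⊕ ι) R :=
  X (inl j) * X (inr k) - X (inl k) * X (inr j)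

noncomputable def xuProd {ι : Type*} (F : Multiset ι) (P : Multiset (ι × ι)) :
    MvPolynomial (ι ⊕ ι) R :=
  (F.map fun i => X (inl i)).prod * (P.map fun p => u p.1 p.2).prod

noncomputable def xyLex (n : ℕ) : MonomialOrder (Fin n ⊕ Fin n) :=
  MonomialOrder.lex.comapEquiv toLex

variable {n : ℕ}

theorem xyLex_lt {j k : Fin n} (h : j < k) :
    (xyLex n).toSyn (single (inl k) 1 + single (inr j) 1)
      < (xyLex n).toSyn (single (inl j) 1 + single (inr k) 1) := by
  rw [xyLex, MonomialOrder.comapEquiv_lt_iff, MonomialOrder.lex_lt_iff]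
  refine Finsupp.Lex.lt_iff.mpr ⟨toLex (inl j), fun i hi => ?_, by simp [h.ne']⟩
  obtain ⟨i | i, rfl⟩ := toLex.surjective i
  · have hij : i < j := Sum.Lex.inl_lt_inl_iff.mp hi
    simp [hij.ne', (hij.trans h).ne']
  · exact absurd hi Sum.Lex.not_inr_lt_inl

theorem exists_isNormal_of_mem_normalProducts {w : MvPolynomial (Fin n ⊕ Fin n) R}
    (hw : w ∈ normalProducts R n) : ∃ F P, IsNormal F P ∧ w = xuProd F P := by
  obtain ⟨c, d, idx, jk, hlt, hcross, hcover, rfl⟩ := hw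
  refine ⟨Finset.univ.val.map idx, Finset.univ.val.map jk, ⟨?_, ?_, ?_⟩, ?_⟩
  · simpa using hlt
  · simpa using hcross
  · simpa using hcover
  · simp [xuProd, u, Finset.prod_eq_multiset_prod, Function.comp_def]

variable [IsDomain R]

theorem degree_u {j k : Fin n} (h : j < k) :
    (xyLex n).degree (u j k : MvPolynomial _ R) = single (inl j) 1 + single (inr k) 1 := by
  rw [u, MonomialOrder.degree_sub_of_lt, MonomialOrder.degree_X_mul_X]
  rw [MonomialOrder.degree_X_mul_X, MonomialOrder.degree_X_mul_X]
  exact xyLex_lt h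

theorem zero_notMem_map_u {P : Multiset (Fin n × Fin n)} (hP : ∀ p ∈ P, p.1 < p.2) :
    (0 : MvPolynomial _ R) ∉ P.map fun p => u p.1 p.2 := by
  simp only [Multiset.mem_map, not_exists, not_and]
  exact fun p hp h => (xyLex n).ne_zero_of_degree_ne_zero (by simp [degree_u (hP p hp)]) h

theorem zero_notMem_map_X (F : Multiset (Fin n)) :
    (0 : MvPolynomial (Fin n ⊕ Fin n) R) ∉ F.map fun i => X (inl i) := by
  simp [Multiset.mem_map, X_ne_zero]

theorem xuProd_ne_zero {F : Multiset (Fin n)} {P : Multiset (Fin n × Fin n)}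
    (hP : ∀ p ∈ P, p.1 < p.2) : (xuProd F P : MvPolynomial _ R) ≠ 0 :=
  mul_ne_zero (Multiset.prod_ne_zero (zero_notMem_map_X F))
    (Multiset.prod_ne_zero (zero_notMem_map_u hP))

theorem degree_xuProd {F : Multiset (Fin n)} {P : Multiset (Fin n × Fin n)}
    (hP : ∀ p ∈ P, p.1 < p.2) :
    (xyLex n).degree (xuProd F P : MvPolynomial _ R) =
      Multiset.toFinsupp ((F + P.map Prod.fst).map inl + (P.map Prod.snd).map inr) := by
  rw [xuProd, (xyLex n).degree_mul (Multiset.prod_ne_zero (zero_notMem_map_X F))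
    (Multiset.prod_ne_zero (zero_notMem_map_u hP)),
    MonomialOrder.degree_multiset_prod _ _ (zero_notMem_map_X F),
    MonomialOrder.degree_multiset_prod _ _ (zero_notMem_map_u hP), Multiset.map_map,
    Multiset.map_map, Multiset.map_congr (f := (xyLex n).degree ∘ fun p => u p.1 p.2) rfl
      fun p hp => degree_u (hP p hp)]
  simp [← Multiset.sum_map_single_one, Multiset.sum_map_add, Multiset.map_map,
    MonomialOrder.degree_X, add_assoc]

theorem ne_zero_of_mem_normalProducts {w : MvPolynomial (Fin n ⊕ Fin n) R}
    (hw : w ∈ normalProducts R n) : w ≠ 0 := by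
  obtain ⟨F, P, h, rfl⟩ := exists_isNormal_of_mem_normalProducts hw
  exact xuProd_ne_zero h.lt

theorem degree_injOn_normalProducts : Set.InjOn (xyLex n).degree (normalProducts R n) := by
  intro w₁ hw₁ w₂ hw₂ h
  obtain ⟨F₁, P₁, h₁, rfl⟩ := exists_isNormal_of_mem_normalProducts hw₁
  obtain ⟨F₂, P₂, h₂, rfl⟩ := exists_isNormal_of_mem_normalProducts hw₂
  rw [degree_xuProd h₁.lt, degree_xuProd h₂.lt, Multiset.toFinsupp.injective.eq_iff,
    Multiset.map_inl_add_map_inr_inj] at h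
  obtain ⟨rfl, rfl⟩ := h₁.unique h₂ h.1 h.2
  rfl

end NormalProducts

theorem normalProducts_linearIndependent_general {K : Type*} [Field K] (n : ℕ) :
    LinearIndependent K
      (fun b : normalProducts K n => (b : MvPolynomial (Fin n ⊕ Fin n) K)) :=
  (NormalProducts.xyLex n).linearIndependent_of_injective_degree
    (fun b => NormalProducts.ne_zero_of_mem_normalProducts b.2)
    fun b₁ b₂ h => Subtype.ext (NormalProducts.degree_injOn_normalProducts b₁.2 b₂.2 h)

/-- The set of normal products is linearly independent over `K`. -/
theorem normalProducts_linearIndependent {K : Type*} [Field K] [CharZero K] (n : ℕ) :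
    LinearIndependent K
      (fun b : normalProducts K n => (b : MvPolynomial (Fin n ⊕ Fin n) K)) :=
  normalProducts_linearIndependent_general n
end

section
/- Let K be a field of characteristic 0, n ≥ 2, and Δ = Σ_{i=1}^n x_i ∂/∂y_i the derivation of K[X,Y] = K[x_1,…,x_n,y_1,…,y_n]. Suppose f = a_p y_n^p + a_{p−1} x_n y_n^{p−1} + ⋯ + a_1 x_n^{p−1} y_n + a_0 x_n^p, where each a_i belongs to the subalgebra K[x_1,…,x_{n−1},y_1,…,y_{n−1}]. If Δ(f) = 0, then Δ(a_p) = 0, i.e., the leading coefficient a_p lies in the algebra of constants K[x_1,…,x_{n−1},y_1,…,y_{n−1}]^Δ. -/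
open MvPolynomial

/-- The Weitzenböck derivation `Δ = Σ_{i=1}^n x_i ∂/∂y_i` of `K[x_1,…,x_n,y_1,…,y_n]`,
where `x_i = X (Sum.inl i)` and `y_i = X (Sum.inr i)`. -/
noncomputable def weitzDelta (K : Type*) [CommSemiring K] (n : ℕ) :
    Derivation K (MvPolynomial (Fin n ⊕ Fin n) K) (MvPolynomial (Fin n ⊕ Fin n) K) :=
  MvPolynomial.mkDerivation K
    (Sum.elim (fun _ => 0) (fun i => X (Sum.inl i)))

section Aux

variable {K : Type*} [Field K] [CharZero K] (m : ℕ)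

noncomputable def auxG : Fin (m + 2) ⊕ Fin (m + 2) → MvPolynomial (Fin (m + 2) ⊕ Fin (m + 2)) K :=
  fun v => if v = Sum.inl (Fin.last (m + 1)) then 0
    else if v = Sum.inr (Fin.last (m + 1)) then 1 else X v

omit [CharZero K] in
lemma auxG_fix {q : MvPolynomial (Fin (m + 2) ⊕ Fin (m + 2)) K}
    (hq : q ∈ MvPolynomial.supported K
      ({Sum.inl (Fin.last (m + 1)), Sum.inr (Fin.last (m + 1))}ᶜ :
        Set (Fin (m + 2) ⊕ Fin (m + 2)))) :
    aeval (auxG (K := K) m) q = q := by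
  rw [MvPolynomial.supported] at hq
  induction hq using Algebra.adjoin_induction with
  | mem x hx =>
    obtain ⟨v, hv, rfl⟩ := hx
    simp only [Set.mem_compl_iff, Set.mem_insert_iff, Set.mem_singleton_iff, not_or] at hv
    simp [auxG, hv.1, hv.2]
  | algebraMap r => simp [MvPolynomial.algebraMap_eq]
  | add x y hx hy ihx ihy => rw [map_add, ihx, ihy]
  | mul x y hx hy ihx ihy => rw [map_mul, ihx, ihy]

omit [CharZero K] in
lemma delta_supported {q : MvPolynomial (Fin (m + 2) ⊕ Fin (m + 2)) K}
    (hq : q ∈ MvPolynomial.supported K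
      ({Sum.inl (Fin.last (m + 1)), Sum.inr (Fin.last (m + 1))}ᶜ :
        Set (Fin (m + 2) ⊕ Fin (m + 2)))) :
    weitzDelta K (m + 2) q ∈ MvPolynomial.supported K
      ({Sum.inl (Fin.last (m + 1)), Sum.inr (Fin.last (m + 1))}ᶜ :
        Set (Fin (m + 2) ⊕ Fin (m + 2))) := by
  have hq' : q ∈ Algebra.adjoin K
      (X '' ({Sum.inl (Fin.last (m + 1)), Sum.inr (Fin.last (m + 1))}ᶜ :
        Set (Fin (m + 2) ⊕ Fin (m + 2)))) := hq
  induction hq' using Algebra.adjoin_induction with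
  | mem x hx =>
    obtain ⟨v, hv, rfl⟩ := hx
    simp only [Set.mem_compl_iff, Set.mem_insert_iff, Set.mem_singleton_iff, not_or] at hv
    cases v with
    | inl j =>
      simp only [weitzDelta, MvPolynomial.mkDerivation_X, Sum.elim_inl]
      exact zero_mem _
    | inr j =>
      simp only [weitzDelta, MvPolynomial.mkDerivation_X, Sum.elim_inr]
      rw [MvPolynomial.X_mem_supported]
      simp only [Set.mem_compl_iff, Set.mem_insert_iff, Set.mem_singleton_iff, not_or]
      refine ⟨fun h => hv.2 ?_, by simp⟩
      injection h with h'
      rw [h']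
  | algebraMap r =>
    rw [Derivation.map_algebraMap]
    exact zero_mem _
  | add x y hx hy ihx ihy =>
    rw [map_add]
    exact add_mem (ihx hx) (ihy hy)
  | mul x y hx hy ihx ihy =>
    rw [Derivation.leibniz, smul_eq_mul, smul_eq_mul]
    exact add_mem (mul_mem hx (ihy hy)) (mul_mem hy (ihx hx))

end Aux

/-- Let `n = m + 2 ≥ 2` and `f = Σ_{i=0}^{p} a_i x_n^{p-i} y_n^i` with every `a_i` in the
subalgebra `K[x_1,…,x_{n-1},y_1,…,y_{n-1}]` (polynomials supported away from `x_n, y_n`).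
If `Δ(f) = 0`, then `Δ(a_p) = 0`, i.e. the leading coefficient `a_p` lies in the algebra
of constants of the subalgebra in the first `n - 1` pairs of variables. -/
theorem leading_coefficient_is_constant {K : Type*} [Field K] [CharZero K] (m p : ℕ)
    (a : Fin (p + 1) → MvPolynomial (Fin (m + 2) ⊕ Fin (m + 2)) K)
    (ha : ∀ i, a i ∈ MvPolynomial.supported K
      ({Sum.inl (Fin.last (m + 1)), Sum.inr (Fin.last (m + 1))}ᶜ :
        Set (Fin (m + 2) ⊕ Fin (m + 2))))
    (f : MvPolynomial (Fin (m + 2) ⊕ Fin (m + 2)) K)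
    (hf : f = ∑ i : Fin (p + 1),
      a i * X (Sum.inl (Fin.last (m + 1))) ^ (p - (i : ℕ)) *
        X (Sum.inr (Fin.last (m + 1))) ^ (i : ℕ))
    (h0 : weitzDelta K (m + 2) f = 0) :
    weitzDelta K (m + 2) (a (Fin.last p)) = 0 := by
  set x : MvPolynomial (Fin (m + 2) ⊕ Fin (m + 2)) K := X (Sum.inl (Fin.last (m + 1))) with hx
  set y : MvPolynomial (Fin (m + 2) ⊕ Fin (m + 2)) K := X (Sum.inr (Fin.last (m + 1))) with hy
  have hΔx : weitzDelta K (m + 2) x = 0 := by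
    simp [weitzDelta, MvPolynomial.mkDerivation_X, hx]
  have hΔy : weitzDelta K (m + 2) y = x := by
    simp [weitzDelta, MvPolynomial.mkDerivation_X, hy, hx]
  have hgx : aeval (auxG (K := K) m) x = 0 := by simp [auxG, hx]
  have hgy : aeval (auxG (K := K) m) y = 1 := by simp [auxG, hy]
  have hDf : weitzDelta K (m + 2) f
      = ∑ i : Fin (p + 1),
        (weitzDelta K (m + 2) (a i) * x ^ (p - (i : ℕ)) * y ^ (i : ℕ)
          + a i * x ^ (p - (i : ℕ)) * ((i : ℕ) • (y ^ ((i : ℕ) - 1) * x))) := by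
    rw [hf, map_sum]
    refine Finset.sum_congr rfl fun i _ => ?_
    rw [Derivation.leibniz, Derivation.leibniz, Derivation.leibniz_pow,
      Derivation.leibniz_pow, hΔx, hΔy]
    simp only [smul_eq_mul, nsmul_eq_mul]
    ring
  have h1 : aeval (auxG (K := K) m) (weitzDelta K (m + 2) f) = 0 := by rw [h0]; simp
  rw [hDf, map_sum] at h1
  have h2 : ∀ i : Fin (p + 1),
      aeval (auxG (K := K) m) (weitzDelta K (m + 2) (a i) * x ^ (p - (i : ℕ)) * y ^ (i : ℕ)
        + a i * x ^ (p - (i : ℕ)) * ((i : ℕ) • (y ^ ((i : ℕ) - 1) * x)))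
      = weitzDelta K (m + 2) (a i) *
          (0 : MvPolynomial (Fin (m + 2) ⊕ Fin (m + 2)) K) ^ (p - (i : ℕ)) := by
    intro i
    simp only [map_add, map_mul, map_pow, map_nsmul, hgx, hgy,
      auxG_fix m (delta_supported m (ha i)), auxG_fix m (ha i)]
    simp
  rw [Finset.sum_congr rfl (fun i _ => h2 i)] at h1
  rw [Finset.sum_eq_single (Fin.last p)] at h1
  · simpa using h1
  · intro i _ hi
    have hip : (i : ℕ) ≠ p := by simpa [Fin.ext_iff] using hi
    have hlt : (i : ℕ) < p + 1 := i.isLt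
    rw [zero_pow (by omega), mul_zero]
  · simp
end

section
/- Let K be a field of characteristic 0 and n ≥ 2. For every nonzero α = (α_1,…,α_{n−1}) ∈ K^{n−1}, the polynomial w_α = (α_1x_1+⋯+α_{n−1}x_{n−1})y_n − (α_1y_1+⋯+α_{n−1}y_{n−1})x_n is irreducible in the polynomial ring K[x_1,…,x_n,y_1,…,y_n]. -/
/-!
As a polynomial in `y_n`, `w_α = A * y_n - B * x_n` with `A = Σ α_i x_i` and `B = Σ α_i y_i`, and
neither `A` nor `B * x_n` involves `y_n`. Such a linear polynomial is irreducible once its two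
coefficients are relatively prime. The linear form `A` is irreducible, and it cannot divide
`B * x_n`: setting the variables of `A` to zero kills `A` but fixes `B * x_n`, whose variables are
disjoint from those of `A`.
-/

open MvPolynomial

namespace MvPolynomial

variable {R σ ι : Type*} [Fintype ι]

theorem eq_zero_of_dvd_of_disjoint_vars [CommRing R] {f g : MvPolynomial σ R}
    (hf : constantCoeff f = 0) (hfg : f ∣ g) (hdisj : Disjoint f.vars g.vars) : g = 0 := by
  classical
  let φ : MvPolynomial σ R →ₐ[R] MvPolynomial σ R := aeval fun s ↦ if s ∈ f.vars then 0 else X s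
  have hφf : φ f = 0 := by
    rw [← map_zero C, ← hf]
    refine hom_congr_vars (f₂ := C.comp constantCoeff) (by ext; simp [φ]) (fun s _ hs ↦ ?_) rfl
    simp [φ, hs]
  have hφg : φ g = g := by
    conv_rhs => rw [← aeval_X_left_apply g]
    refine hom_congr_vars (f₁ := φ.toRingHom) (f₂ := (aeval X).toRingHom) (by ext; simp [φ])
      (fun s _ hs ↦ ?_) rfl
    simp [φ, Finset.disjoint_right.mp hdisj hs]
  simpa [hφf, hφg] using map_dvd φ hfg

theorem vars_sum_C_mul_X_subset [CommSemiring R] (v : ι → σ) (α : ι → R) :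
    ((∑ j, C (α j) * X (v j) : MvPolynomial σ R).vars : Set σ) ⊆ Set.range v := by
  intro s hs
  have hrename : ∑ j, C (α j) * X (v j) = rename v (∑ j, C (α j) * X j) := by simp
  rw [hrename] at hs
  obtain ⟨j, -, rfl⟩ := mem_vars_rename v _ hs
  exact ⟨j, rfl⟩

theorem coeff_single_sum_C_mul_X [CommSemiring R] {v : ι → σ} (hv : v.Injective) (α : ι → R)
    (i : ι) :
    coeff (Finsupp.single (v i) 1) (∑ j, C (α j) * X (v j)) = α i := by
  classical
  simp [coeff_sum, coeff_C_mul, coeff_X, Finsupp.single_left_inj, hv.eq_iff]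

theorem irreducible_sum_C_mul_X [Field R] {v : ι → σ} (hv : v.Injective) {α : ι → R}
    (hα : α ≠ 0) :
    Irreducible (∑ j, C (α j) * X (v j)) := by
  classical
  obtain ⟨i, hi⟩ := Function.ne_iff.mp hα
  refine irreducible_of_totalDegree_eq_one (le_antisymm ?_ ?_) fun x hx ↦ ?_
  · exact (totalDegree_finsetSum_le fun j _ ↦ (totalDegree_mul _ _).trans (by simp))
  · refine le_trans ?_ (le_totalDegree (s := Finsupp.single (v i) 1) ?_)
    · simp
    · simpa [coeff_single_sum_C_mul_X hv] using hi
  · have := hx (Finsupp.single (v i) 1)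
    rw [coeff_single_sum_C_mul_X hv] at this
    exact Ne.isUnit (by rintro rfl; exact hi (zero_dvd_iff.mp this))

theorem irreducible_sum_C_mul_X_mul_X_sub_sum_C_mul_X_mul_X [Field R] {κ : Type*}
    {v : ι → κ} (hv : v.Injective) {p : κ} (hvp : ∀ i, v i ≠ p) {α : ι → R} (hα : α ≠ 0) :
    Irreducible ((∑ j, C (α j) * X (Sum.inl (v j))) * X (Sum.inr p) -
      (∑ j, C (α j) * X (Sum.inr (v j))) * X (Sum.inl p) : MvPolynomial (κ ⊕ κ) R) := by
  classical
  set A : MvPolynomial (κ ⊕ κ) R := ∑ j, C (α j) * X (Sum.inl (v j))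
  set B : MvPolynomial (κ ⊕ κ) R := ∑ j, C (α j) * X (Sum.inr (v j))
  have hA : Irreducible A := irreducible_sum_C_mul_X (Sum.inl_injective.comp hv) hα
  have hB : B ≠ 0 := (irreducible_sum_C_mul_X (Sum.inr_injective.comp hv) hα).ne_zero
  have hvarsA : ∀ s ∈ A.vars, ∃ j, Sum.inl (v j) = s := vars_sum_C_mul_X_subset _ α
  have hvarsBX : ∀ s ∈ (-(B * X (Sum.inl p))).vars, s = Sum.inl p ∨ ∃ j, Sum.inr (v j) = s := by
    intro s hs
    rw [vars_neg] at hs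
    rcases Finset.mem_union.mp (vars_mul _ _ hs) with hs | hs
    · exact .inr (vars_sum_C_mul_X_subset _ α hs)
    · exact .inl (by simpa [vars_X] using hs)
  rw [sub_eq_add_neg]
  refine irreducible_mul_X_add _ _ _ hA.ne_zero ?_ ?_ ?_
  · intro hs
    obtain ⟨j, hj⟩ := hvarsA _ hs
    simp at hj
  · intro hs
    rcases hvarsBX _ hs with hs | ⟨j, hj⟩
    · simp at hs
    · exact hvp j (Sum.inr_injective hj)
  · refine hA.isRelPrime_iff_not_dvd.mpr fun hdvd ↦
      neg_ne_zero.mpr (mul_ne_zero hB (X_ne_zero _))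
        (eq_zero_of_dvd_of_disjoint_vars (by simp [A]) hdvd ?_)
    refine Finset.disjoint_left.mpr fun s hsA hsBX ↦ ?_
    obtain ⟨i, rfl⟩ := hvarsA s hsA
    rcases hvarsBX _ hsBX with hs | ⟨j, hj⟩
    · exact hvp i (Sum.inl_injective hs)
    · simp at hj

end MvPolynomial

theorem wAlpha_irreducible_general {K : Type*} [Field K] (m : ℕ)
    (α : Fin (m + 1) → K) (hα : α ≠ 0) :
    Irreducible (wAlpha K (m + 1) α) :=
  irreducible_sum_C_mul_X_mul_X_sub_sum_C_mul_X_mul_X (Fin.castSucc_injective _)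
    Fin.castSucc_ne_last hα

/-- For `n = m + 2 ≥ 2` and every nonzero `α ∈ K^{n-1}`, the polynomial `w_α` is
irreducible in `K[x_1,…,x_n,y_1,…,y_n]`. -/
theorem wAlpha_irreducible {K : Type*} [Field K] [CharZero K] (m : ℕ)
    (α : Fin (m + 1) → K) (hα : α ≠ 0) :
    Irreducible (wAlpha K (m + 1) α) :=
  wAlpha_irreducible_general m α hα
end

section
/- Let K be a field of characteristic 0 and n > 2, and for α ∈ K^{n−1} let w_α = (Σ_{i=1}^{n−1} α_i x_i)y_n − (Σ_{i=1}^{n−1} α_i y_i)x_n ∈ K[x_1,…,x_n,y_1,…,y_n]. Then the polynomials w_α, as α ranges over nonzero elements of K^{n−1}, include infinitely many pairwise non-associated irreducible polynomials (e.g., the polynomials (x_1 + βx_2)y_n − (y_1 + βy_2)x_n for distinct β ∈ K are pairwise non-associated and irreducible), and hence no nonzero polynomial f ∈ K[x_1,…,x_n,y_1,…,y_n] is divisible by w_α for every nonzero α ∈ K^{n−1}. -/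
open MvPolynomial

/-- The special polynomial `(x_1 + β x_2) y_n - (y_1 + β y_2) x_n` for `β ∈ K`,
in `K[x_1,…,x_n,y_1,…,y_n]` with `n = m + 3 > 2`. -/
noncomputable def vBeta (K : Type*) [CommRing K] (m : ℕ) (β : K) :
    MvPolynomial (Fin (m + 3) ⊕ Fin (m + 3)) K :=
  (X (Sum.inl (0 : Fin (m + 3))) + C β * X (Sum.inl (1 : Fin (m + 3)))) *
      X (Sum.inr (Fin.last (m + 2))) -
    (X (Sum.inr (0 : Fin (m + 3))) + C β * X (Sum.inr (1 : Fin (m + 3)))) *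
      X (Sum.inl (Fin.last (m + 2)))

theorem mv_prime_X {K σ : Type*} [Field K] (i : σ) : Prime (X i : MvPolynomial σ K) := by
  classical
  let e : σ ≃ Option {t // t ≠ i} := (Equiv.optionSubtypeNe i).symm
  let E := (renameEquiv K e).trans (optionEquivLeft K {t // t ≠ i})
  have hX : E (X i) = Polynomial.X := by
    simp [E, e, Equiv.optionSubtypeNe_symm_self]
  rw [← MulEquiv.prime_iff (E.toRingEquiv.toMulEquiv)]
  show Prime (E (X i))
  rw [hX]
  exact Polynomial.prime_X

theorem irreducible_linear_aux {R : Type*} [CommRing R] [IsDomain R] {A B : R}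
    (hA : A ≠ 0) (hcop : ∀ r : R, r ∣ A → r ∣ B → IsUnit r) :
    Irreducible (Polynomial.C A * Polynomial.X + Polynomial.C B) := by
  set p := Polynomial.C A * Polynomial.X + Polynomial.C B with hp
  have hdeg : p.natDegree = 1 := Polynomial.natDegree_linear hA
  have hpne : p ≠ 0 := fun h => by simp [h] at hdeg
  have key : ∀ u : Polynomial R, u ∣ p → u.natDegree = 0 → IsUnit u := by
    intro u hu h0
    have hu_eq : u = Polynomial.C (u.coeff 0) :=
      Polynomial.eq_C_coeff_zero_iff_natDegree_eq_zero.mpr h0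
    rw [hu_eq] at hu ⊢
    have hd : ∀ i, u.coeff 0 ∣ p.coeff i := (Polynomial.C_dvd_iff_dvd_coeff _ p).mp hu
    have h1 : p.coeff 1 = A := by simp [hp]
    have h0' : p.coeff 0 = B := by simp [hp]
    exact Polynomial.isUnit_C.mpr (hcop _ (h1 ▸ hd 1) (h0' ▸ hd 0))
  constructor
  · intro h
    have := Polynomial.natDegree_eq_zero_of_isUnit h
    omega
  · intro u v huv
    have hu0 : u ≠ 0 := fun h => hpne (by simp [huv, h])
    have hv0 : v ≠ 0 := fun h => hpne (by simp [huv, h])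
    have hsum : u.natDegree + v.natDegree = 1 := by
      rw [← Polynomial.natDegree_mul hu0 hv0, ← huv, hdeg]
    rcases Nat.eq_zero_or_pos u.natDegree with h | h
    · exact Or.inl (key u ⟨v, huv⟩ h)
    · exact Or.inr (key v ⟨u, by rw [huv, mul_comm]⟩ (by omega))

theorem irreducible_XX {K σ : Type*} [Field K] (i j k l : σ)
    (hli : l ≠ i) (hlj : l ≠ j) (hlk : l ≠ k) (hij : i ≠ j) (hik : i ≠ k) :
    Irreducible (X i * X l - X j * X k : MvPolynomial σ K) := by
  classical
  let e : σ ≃ Option {t // t ≠ l} := (Equiv.optionSubtypeNe l).symm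
  let E := (renameEquiv K e).trans (optionEquivLeft K {t // t ≠ l})
  rw [← MulEquiv.irreducible_iff (E.toRingEquiv.toMulEquiv)]
  show Irreducible (E (X i * X l - X j * X k))
  set i' : {t // t ≠ l} := ⟨i, Ne.symm hli⟩
  set j' : {t // t ≠ l} := ⟨j, Ne.symm hlj⟩
  set k' : {t // t ≠ l} := ⟨k, Ne.symm hlk⟩
  have hE : E (X i * X l - X j * X k) =
      Polynomial.C (X i') * Polynomial.X + Polynomial.C (-(X j' * X k')) := by
    have h1 : e i = some i' := Equiv.optionSubtypeNe_symm_of_ne (Ne.symm hli)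
    have h2 : e j = some j' := Equiv.optionSubtypeNe_symm_of_ne (Ne.symm hlj)
    have h3 : e k = some k' := Equiv.optionSubtypeNe_symm_of_ne (Ne.symm hlk)
    have h4 : e l = none := Equiv.optionSubtypeNe_symm_self l
    simp [E, map_sub, map_mul, renameEquiv_apply, rename_X, h1, h2, h3, h4,
      optionEquivLeft_X_some, optionEquivLeft_X_none, sub_eq_add_neg]
  rw [hE]
  apply irreducible_linear_aux (X_ne_zero i')
  intro r hrA hrB
  by_contra hnu
  have hprime := mv_prime_X (K := K) i'
  rcases hrA with ⟨s, hs⟩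
  rcases hprime.irreducible.isUnit_or_isUnit hs with h | h
  · exact hnu h
  · rcases h with ⟨w, rfl⟩
    have hr : r = X i' * (↑w⁻¹ : MvPolynomial {t // t ≠ l} K) := by
      rw [hs, mul_assoc]
      simp
    have hdvd : (X i' : MvPolynomial {t // t ≠ l} K) ∣ X j' * X k' := by
      rw [← dvd_neg]
      exact dvd_trans (Dvd.intro _ hr.symm) hrB
    have := map_dvd (eval (fun t => if t = i' then (0 : K) else 1)) hdvd
    have hji : j' ≠ i' := fun h => hij (congrArg Subtype.val h).symm
    have hki : k' ≠ i' := fun h => hik (congrArg Subtype.val h).symm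
    simp [hji, hki] at this

noncomputable def shiftHom {K σ : Type*} [CommRing K] [DecidableEq σ] (a b : σ) (c : K) :
    MvPolynomial σ K →ₐ[K] MvPolynomial σ K :=
  aeval (fun t => if t = a then X a + C c * X b else X t)

lemma shiftHom_X_self {K σ : Type*} [CommRing K] [DecidableEq σ] (a b : σ) (c : K) :
    shiftHom a b c (X a) = X a + C c * X b := by simp [shiftHom]

lemma shiftHom_C {K σ : Type*} [CommRing K] [DecidableEq σ] (a b : σ) (c r : K) :
    shiftHom a b c (C r) = C r := by simp [shiftHom]

lemma shiftHom_X_ne {K σ : Type*} [CommRing K] [DecidableEq σ] (a b : σ) (c : K)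
    {t : σ} (h : t ≠ a) : shiftHom a b c (X t) = X t := by simp [shiftHom, h]

noncomputable def shiftEquiv {K σ : Type*} [CommRing K] [DecidableEq σ] (a b : σ)
    (hab : b ≠ a) (c : K) : MvPolynomial σ K ≃ₐ[K] MvPolynomial σ K :=
  AlgEquiv.ofAlgHom (shiftHom a b c) (shiftHom a b (-c))
    (by
      apply algHom_ext
      intro t
      by_cases h : t = a
      · subst h
        simp [shiftHom_X_self, map_add, map_mul, shiftHom_X_ne _ _ _ hab, map_neg]
      · simp [shiftHom_X_ne _ _ _ h])
    (by
      apply algHom_ext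
      intro t
      by_cases h : t = a
      · subst h
        simp [shiftHom_X_self, map_add, map_mul, shiftHom_X_ne _ _ _ hab, map_neg]
      · simp [shiftHom_X_ne _ _ _ h])

lemma shiftEquiv_apply {K σ : Type*} [CommRing K] [DecidableEq σ] (a b : σ)
    (hab : b ≠ a) (c : K) (p : MvPolynomial σ K) :
    shiftEquiv a b hab c p = shiftHom a b c p := rfl

lemma sum_alpha {K : Type*} [CommRing K] (m : ℕ) (β : K)
    (g : Fin (m + 3) → (Fin (m + 3) ⊕ Fin (m + 3))) :
    ∑ j : Fin (m + 2), C (if j = 0 then (1 : K) else if j = 1 then β else 0) * X (g j.castSucc) =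
      X (g 0) + C β * X (g 1) := by
  rw [Fin.sum_univ_succ, Fin.sum_univ_succ]
  have key : ∀ i : Fin m,
      (if i.succ.succ = (0 : Fin (m + 2)) then (1 : K) else if i.succ.succ = 1 then β else 0) = 0 := by
    intro i
    rw [if_neg (Fin.succ_ne_zero _), if_neg]
    intro h
    exact Fin.succ_ne_zero _ (Fin.succ_injective _ (h.trans Fin.succ_zero_eq_one.symm))
  simp [key, Fin.succ_zero_eq_one,
    show ∀ i : Fin m, (i.succ.succ : Fin (m + 2)) ≠ 1 from fun i h =>
      Fin.succ_ne_zero _ (Fin.succ_injective _ (h.trans Fin.succ_zero_eq_one.symm))]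

/-- For `n = m + 3 > 2`: the polynomials `(x_1 + β x_2) y_n - (y_1 + β y_2) x_n` are
irreducible and pairwise non-associated for distinct `β ∈ K`, and consequently no nonzero
polynomial of `K[x_1,…,x_n,y_1,…,y_n]` is divisible by `w_α` for every nonzero
`α ∈ K^{n-1}`. -/
theorem no_common_multiple_of_all_wAlpha {K : Type*} [Field K] [CharZero K] (m : ℕ) :
    (∀ β : K, Irreducible (vBeta K m β)) ∧
    (∀ β β' : K, β ≠ β' → ¬ Associated (vBeta K m β) (vBeta K m β')) ∧
    (∀ f : MvPolynomial (Fin (m + 3) ⊕ Fin (m + 3)) K, f ≠ 0 →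
      ¬ (∀ α : Fin (m + 2) → K, α ≠ 0 → wAlpha K (m + 2) α ∣ f)) := by
  classical
  have h01 : (0 : Fin (m + 3)) ≠ 1 := by simp
  have h10 : (1 : Fin (m + 3)) ≠ 0 := h01.symm
  have hl0 : Fin.last (m + 2) ≠ (0 : Fin (m + 3)) := by simp [Fin.ext_iff]
  have hl1 : Fin.last (m + 2) ≠ (1 : Fin (m + 3)) := by simp [Fin.ext_iff]
  set w0 : MvPolynomial (Fin (m + 3) ⊕ Fin (m + 3)) K :=
    X (Sum.inl 0) * X (Sum.inr (Fin.last (m + 2))) -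
      X (Sum.inr 0) * X (Sum.inl (Fin.last (m + 2))) with hw0def
  set w2 : MvPolynomial (Fin (m + 3) ⊕ Fin (m + 3)) K :=
    X (Sum.inl 1) * X (Sum.inr (Fin.last (m + 2))) -
      X (Sum.inr 1) * X (Sum.inl (Fin.last (m + 2))) with hw2def
  have hw0 : Irreducible w0 :=
    irreducible_XX _ _ _ _ (by simp) (by simp [hl0]) (by simp) (by simp) (by simp [Ne.symm hl0])
  have hw2 : Irreducible w2 :=
    irreducible_XX _ _ _ _ (by simp) (by simp [hl1]) (by simp) (by simp) (by simp [Ne.symm hl1])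
  have hne1 : (Sum.inl (1 : Fin (m + 3)) : Fin (m + 3) ⊕ Fin (m + 3)) ≠ Sum.inl 0 := by
    simp [h10]
  have hne2 : (Sum.inr (1 : Fin (m + 3)) : Fin (m + 3) ⊕ Fin (m + 3)) ≠ Sum.inr 0 := by
    simp [h10]
  have hveq : ∀ β : K,
      vBeta K m β = shiftEquiv _ _ hne1 β (shiftEquiv _ _ hne2 β w0) := by
    intro β
    rw [shiftEquiv_apply, shiftEquiv_apply, hw0def]
    simp only [map_sub, map_mul, shiftHom_X_self,
      shiftHom_X_ne _ _ _ (show (Sum.inl (0:Fin (m+3)) : Fin (m+3) ⊕ Fin (m+3)) ≠ Sum.inr 0 by simp),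
      shiftHom_X_ne _ _ _ (show (Sum.inr (Fin.last (m+2)) : Fin (m+3) ⊕ Fin (m+3)) ≠ Sum.inr 0 by simp [hl0]),
      shiftHom_X_ne _ _ _ (show (Sum.inl (Fin.last (m+2)) : Fin (m+3) ⊕ Fin (m+3)) ≠ Sum.inr 0 by simp),
      shiftHom_X_ne _ _ _ (show (Sum.inr (Fin.last (m+2)) : Fin (m+3) ⊕ Fin (m+3)) ≠ Sum.inl 0 by simp),
      shiftHom_X_ne _ _ _ (show (Sum.inr (0:Fin (m+3)) : Fin (m+3) ⊕ Fin (m+3)) ≠ Sum.inl 0 by simp),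
      shiftHom_X_ne _ _ _ (show (Sum.inr (1:Fin (m+3)) : Fin (m+3) ⊕ Fin (m+3)) ≠ Sum.inl 0 by simp),
      shiftHom_X_ne _ _ _ (show (Sum.inl (Fin.last (m+2)) : Fin (m+3) ⊕ Fin (m+3)) ≠ Sum.inl 0 by simp [hl0]),
      map_add, map_mul, shiftHom_C, vBeta]
  have irr : ∀ β : K, Irreducible (vBeta K m β) := by
    intro β
    rw [hveq β]
    exact (MulEquiv.irreducible_iff (shiftEquiv _ _ hne1 β)).mpr
      ((MulEquiv.irreducible_iff (shiftEquiv _ _ hne2 β)).mpr hw0)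
  have nonassoc : ∀ β β' : K, β ≠ β' → ¬ Associated (vBeta K m β) (vBeta K m β') := by
    intro β β' hne hass
    have hdvd : vBeta K m β ∣ vBeta K m β' := hass.dvd
    have hdiff : vBeta K m β' - vBeta K m β = C (β' - β) * w2 := by
      rw [hw2def]
      simp only [vBeta, map_sub]
      ring
    have hdvd2 : vBeta K m β ∣ C (β' - β) * w2 := by
      rw [← hdiff]
      exact dvd_sub hdvd dvd_rfl
    have hunit : IsUnit (C (β' - β) : MvPolynomial (Fin (m + 3) ⊕ Fin (m + 3)) K) := by
      exact IsUnit.map (C : K →+* MvPolynomial (Fin (m + 3) ⊕ Fin (m + 3)) K)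
        (sub_ne_zero.mpr (Ne.symm hne)).isUnit
    have hdvd3 : vBeta K m β ∣ w2 := by
      rcases hunit with ⟨u, hu⟩
      rw [← hu] at hdvd2
      exact (Units.dvd_mul_left).mp hdvd2
    have hassoc2 : Associated (vBeta K m β) w2 := (irr β).associated_of_dvd hw2 hdvd3
    obtain ⟨h, hh⟩ := hassoc2.symm.dvd
    set F : MvPolynomial (Fin (m + 3) ⊕ Fin (m + 3)) K →ₐ[K]
        MvPolynomial (Fin (m + 3) ⊕ Fin (m + 3)) K :=
      aeval (fun t => if t = Sum.inl (1 : Fin (m + 3)) then 0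
        else if t = Sum.inr (1 : Fin (m + 3)) then 0 else X t) with hF
    have hFv : F (vBeta K m β) = w0 := by
      simp [hF, vBeta, hw0def, h01, hl1, hl0]
    have hFw2 : F w2 = 0 := by
      simp [hF, hw2def]
    have hzero : w0 = 0 := by
      rw [← hFv, hh, map_mul, hFw2, zero_mul]
    exact hw0.ne_zero hzero
  refine ⟨irr, nonassoc, ?_⟩
  intro f hf h
  have hwv : ∀ β : K,
      wAlpha K (m + 2) (fun j => if j = 0 then 1 else if j = 1 then β else 0) = vBeta K m β := by
    intro β
    simp only [wAlpha, vBeta]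
    rw [sum_alpha m β Sum.inl, sum_alpha m β Sum.inr]
  have hv : ∀ β : K, vBeta K m β ∣ f := by
    intro β
    have hα : (fun j : Fin (m + 2) => if j = 0 then (1 : K) else if j = 1 then β else 0) ≠ 0 := by
      intro hzero
      have := congrFun hzero 0
      simp at this
    have := h _ hα
    rwa [hwv β] at this
  have hfac := fun β : K =>
    UniqueFactorizationMonoid.exists_mem_factors_of_dvd hf (irr β) (hv β)
  choose g hg hass using hfac
  set S := (UniqueFactorizationMonoid.factors f).toFinset with hS
  have hcard : ((Finset.range (S.card + 1)).image (Nat.cast : ℕ → K)).card = S.card + 1 := by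
    rw [Finset.card_image_of_injective _ Nat.cast_injective, Finset.card_range]
  have hle := Finset.card_le_card_of_injOn
    (s := (Finset.range (S.card + 1)).image (Nat.cast : ℕ → K)) (t := S) g
    (fun β _ => Multiset.mem_toFinset.mpr (hg β))
    (fun β hβ β' hβ' hgg => by
      by_contra hne
      exact nonassoc β β' hne ((hass β).trans (by rw [hgg]; exact (hass β').symm)))
  rw [hcard] at hle
  omega
end

section
/- Let K be a field of characteristic 0. Order the monomials of K[X,Y] = K[x_1,…,x_n,y_1,…,y_n] by: x_1^{a_1}y_1^{b_1}⋯x_n^{a_n}y_n^{b_n} > x_1^{a'_1}y_1^{b'_1}⋯x_n^{a'_n}y_n^{b'_n} iff (a_1,b_1,…,a_n,b_n) > (a'_1,b'_1,…,a'_n,b'_n) lexicographically. Then for any product w = x_{i_1}⋯x_{i_c}·u_{j_1k_1}⋯u_{j_dk_d} (where u_{jk} = x_jy_k − x_ky_j, j < k) satisfying the normality conditions — no two factors u_{j_pk_p}, u_{j_qk_q} intersect each other and no factor covers an x_{i_t} — the leading monomial of w with respect to this order is x_{i_1}⋯x_{i_c}·x_{j_1}y_{k_1}⋯x_{j_d}y_{k_d},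 and distinct such normal products have distinct leading monomials. -/
open MvPolynomial

/-- The position of a variable in the ordering `x_1, y_1, x_2, y_2, …, x_n, y_n`:
`x_i = X (Sum.inl i)` sits at position `2i`, `y_i = X (Sum.inr i)` at position `2i + 1`. -/
def varRank {n : ℕ} : Fin n ⊕ Fin n → ℕ :=
  Sum.elim (fun i => 2 * (i : ℕ)) (fun i => 2 * (i : ℕ) + 1)

/-- `lexGT e e'` means that the exponent vector `(a_1, b_1, …, a_n, b_n)` of `e` is
strictly larger than that of `e'` in the lexicographic order: at the first position where
they differ, `e` has the larger exponent. -/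
def lexGT {n : ℕ} (e e' : (Fin n ⊕ Fin n) →₀ ℕ) : Prop :=
  ∃ s : Fin n ⊕ Fin n, (∀ t, varRank t < varRank s → e t = e' t) ∧ e' s < e s

/-- The product `x_{i_1} ⋯ x_{i_c} u_{j_1 k_1} ⋯ u_{j_d k_d}` determined by the data
`idx : Fin c → Fin n` and `jk : Fin d → Fin n × Fin n`, where `u_{jk} = x_j y_k - x_k y_j`. -/
noncomputable def prodOf (K : Type*) [CommRing K] {n c d : ℕ}
    (idx : Fin c → Fin n) (jk : Fin d → Fin n × Fin n) :
    MvPolynomial (Fin n ⊕ Fin n) K :=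
  (∏ t, X (Sum.inl (idx t))) *
    ∏ p, (X (Sum.inl (jk p).1) * X (Sum.inr (jk p).2) -
      X (Sum.inl (jk p).2) * X (Sum.inr (jk p).1))

/-- The exponent vector of the monomial `x_{i_1} ⋯ x_{i_c} · x_{j_1} y_{k_1} ⋯ x_{j_d} y_{k_d}`. -/
noncomputable def leadOf {n c d : ℕ} (idx : Fin c → Fin n) (jk : Fin d → Fin n × Fin n) :
    (Fin n ⊕ Fin n) →₀ ℕ :=
  (∑ t, Finsupp.single (Sum.inl (idx t)) 1) +
    ∑ p, (Finsupp.single (Sum.inl (jk p).1) 1 + Finsupp.single (Sum.inr (jk p).2) 1)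

/-!
Order the variables `x_1 > y_1 > x_2 > ⋯ > y_n` and take the lexicographic monomial order.
Since `j < k`, the leading monomial of `u_{jk} = x_j y_k - x_k y_j` is `x_j y_k` with coefficient
`1`, so every product of the `x_i` and `u_{jk}` is monic with leading monomial the product of the
leading monomials of its factors.

Normality makes the product recoverable from its leading monomial. Let `k` be the smallest
index with `y_k` dividing the leading monomial and `i` the largest index below `k` with `x_i`
dividing it. Some factor `u_{jk}` exists; `j ≤ i`, and if `j < i` then `x_i` either is a factor
covered by `u_{jk}` or comes from a factor `u_{il}` with `l > k` crossing `u_{jk}`. So `u_{ik}`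
is a factor of every normal product with this leading monomial; cancel it and induct.
-/

open MonomialOrder

lemma varRank_injective {n : ℕ} : Function.Injective (varRank (n := n)) := by
  rintro (a | a) (b | b) h <;> simp only [varRank, Sum.elim_inl, Sum.elim_inr] at h <;> grind

/-- Not an instance: `Fin n ⊕ Fin n` already carries the (non-linear) disjoint-sum order. -/
abbrev varOrder (n : ℕ) : LinearOrder (Fin n ⊕ Fin n) :=
  LinearOrder.lift' varRank varRank_injective

noncomputable def varLex (n : ℕ) : MonomialOrder (Fin n ⊕ Fin n) :=
  @MonomialOrder.lex _ (varOrder n) (@Finite.to_wellFoundedGT _ _ (varOrder n).toPreorder)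

lemma varLex_lt_iff {n : ℕ} {e e' : (Fin n ⊕ Fin n) →₀ ℕ} : e' ≺[varLex n] e ↔ lexGT e e' := by
  unfold varLex
  exact exists_congr fun _ => and_congr (forall₂_congr fun _ _ => eq_comm) Iff.rfl

lemma varLex_minor_lt {n : ℕ} {j k : Fin n} (hjk : j < k) :
    Finsupp.single (Sum.inl k) 1 + Finsupp.single (Sum.inr j) 1 ≺[varLex n]
      Finsupp.single (Sum.inl j) 1 + Finsupp.single (Sum.inr k) 1 := by
  rw [varLex_lt_iff]
  refine ⟨Sum.inl j, fun t ht => ?_, by simp [hjk.ne']⟩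
  rcases t with i | i <;>
    simp only [varRank, Sum.elim_inl, Sum.elim_inr, Finsupp.add_apply, Finsupp.single_apply,
      Sum.inl.injEq, Sum.inr.injEq, reduceCtorEq] at ht ⊢ <;> grind

section Binomial

variable {σ R : Type*} [CommRing R] {m : MonomialOrder σ}

lemma MonomialOrder.Monic.degree_prod {ι : Type*} {P : ι → MvPolynomial σ R} {s : Finset ι}
    (H : ∀ i ∈ s, m.Monic (P i)) : m.degree (∏ i ∈ s, P i) = ∑ i ∈ s, m.degree (P i) :=
  degree_prod_of_regular fun i hi => (H i hi).leadingCoeff_eq_one ▸ isRegular_one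

variable [Nontrivial R]

lemma MonomialOrder.degree_X_mul_X_s16 (a b : σ) :
    m.degree (X a * X b : MvPolynomial σ R) = Finsupp.single a 1 + Finsupp.single b 1 := by
  classical
  rw [X, X, monomial_mul, one_mul, degree_monomial, if_neg one_ne_zero]

lemma MonomialOrder.Monic.degree_mul {f g : MvPolynomial σ R} (hf : m.Monic f)
    (hg : m.Monic g) : m.degree (f * g) = m.degree f + m.degree g :=
  degree_mul_of_isRegular_left (hf.leadingCoeff_eq_one ▸ isRegular_one) hg.ne_zero

variable {a b c d : σ}
  (h : Finsupp.single c 1 + Finsupp.single d 1 ≺[m] Finsupp.single a 1 + Finsupp.single b 1)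
include h

lemma MonomialOrder.degree_X_mul_X_lt :
    m.degree (X c * X d : MvPolynomial σ R) ≺[m] m.degree (X a * X b : MvPolynomial σ R) := by
  rwa [degree_X_mul_X_s16, degree_X_mul_X_s16]

lemma MonomialOrder.degree_binomial :
    m.degree (X a * X b - X c * X d : MvPolynomial σ R) =
      Finsupp.single a 1 + Finsupp.single b 1 := by
  rw [degree_sub_of_lt (degree_X_mul_X_lt h), degree_X_mul_X_s16]

lemma MonomialOrder.monic_binomial : m.Monic (X a * X b - X c * X d : MvPolynomial σ R) := by
  rw [Monic, leadingCoeff_sub_of_lt (degree_X_mul_X_lt h)]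
  exact monic_X.mul monic_X

end Binomial

section ProdOf

variable {K : Type*} [CommRing K] [Nontrivial K] {n c d : ℕ} (idx : Fin c → Fin n)
  {jk : Fin d → Fin n × Fin n} (hlt : ∀ p, (jk p).1 < (jk p).2)
include hlt

lemma monic_prodOf_and_degree :
    (varLex n).Monic (prodOf K idx jk) ∧ (varLex n).degree (prodOf K idx jk) = leadOf idx jk := by
  have hx : ∀ t ∈ Finset.univ, (varLex n).Monic (X (Sum.inl (idx t)) : MvPolynomial _ K) :=
    fun _ _ => monic_X
  have hu := fun p (_ : p ∈ Finset.univ) => monic_binomial (R := K) (varLex_minor_lt (hlt p))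
  refine ⟨(Monic.prod hx).mul (Monic.prod hu), ?_⟩
  rw [prodOf, (Monic.prod hx).degree_mul (Monic.prod hu), Monic.degree_prod hx,
    Monic.degree_prod hu]
  simp only [degree_X, degree_binomial (varLex_minor_lt (hlt _)), leadOf]

end ProdOf

/-- Normality of the product of the `x_i`, `i ∈ P`, and the `u_{jk}`, `(j, k) ∈ U`. -/
structure IsNormal {α : Type*} [LinearOrder α] (P : Multiset α) (U : Multiset (α × α)) :
    Prop where
  lt : ∀ u ∈ U, u.1 < u.2
  not_cross : ∀ u ∈ U, ∀ v ∈ U, ¬(u.1 < v.1 ∧ v.1 < u.2 ∧ u.2 < v.2)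
  not_cover : ∀ u ∈ U, ∀ i ∈ P, ¬(u.1 < i ∧ i < u.2)

namespace IsNormal

variable {α : Type*} [LinearOrder α] {P P' : Multiset α} {U U' : Multiset (α × α)}

lemma mono (h : IsNormal P U) (hU : U' ≤ U) : IsNormal P U' where
  lt u hu := h.lt u (Multiset.mem_of_le hU hu)
  not_cross u hu v hv := h.not_cross u (Multiset.mem_of_le hU hu) v (Multiset.mem_of_le hU hv)
  not_cover u hu := h.not_cover u (Multiset.mem_of_le hU hu)

lemma of_fintype {ι κ : Type*} [Fintype ι] [Fintype κ] (idx : ι → α) (jk : κ → α × α)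
    (hlt : ∀ p, (jk p).1 < (jk p).2)
    (hint : ∀ p q, ¬((jk p).1 < (jk q).1 ∧ (jk q).1 < (jk p).2 ∧ (jk p).2 < (jk q).2))
    (hcov : ∀ p t, ¬((jk p).1 < idx t ∧ idx t < (jk p).2)) :
    IsNormal (Finset.univ.val.map idx) (Finset.univ.val.map jk) where
  lt := by simpa using hlt
  not_cross := by simpa using hint
  not_cover := by simpa using hcov

lemma mem_of_extremal (h : IsNormal P U) {i k : α} (hk : k ∈ U.map Prod.snd)
    (hk_min : ∀ l ∈ U.map Prod.snd, k ≤ l) (hi : i ∈ P + U.map Prod.fst) (hik : i < k)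
    (hi_max : ∀ j ∈ P + U.map Prod.fst, j < k → j ≤ i) : (i, k) ∈ U := by
  obtain ⟨⟨j, k⟩, hu, rfl⟩ := Multiset.mem_map.1 hk
  have hji : j ≤ i :=
    hi_max j (Multiset.mem_add.2 (.inr (Multiset.mem_map_of_mem _ hu))) (h.lt _ hu)
  rcases Multiset.mem_add.1 hi with hP | hU
  · obtain rfl : j = i := hji.eq_of_not_lt fun hlt => h.not_cover _ hu i hP ⟨hlt, hik⟩
    exact hu
  · obtain ⟨⟨i, l⟩, hv, rfl⟩ := Multiset.mem_map.1 hU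
    obtain rfl | hkl := (hk_min l (Multiset.mem_map_of_mem _ hv)).eq_or_lt
    · exact hv
    · obtain rfl : j = i := hji.eq_of_not_lt fun hlt => h.not_cross _ hu _ hv ⟨hlt, hik, hkl⟩
      exact hu

lemma exists_mem_mem_of_map_eq (h : IsNormal P U) (h' : IsNormal P' U')
    (hx : P + U.map Prod.fst = P' + U'.map Prod.fst) (hy : U.map Prod.snd = U'.map Prod.snd)
    (hU : U ≠ 0) : ∃ w ∈ U, w ∈ U' := by
  obtain ⟨⟨j, k⟩, hjk, hk_min⟩ :=
    U.toFinset.exists_min_image Prod.snd (Multiset.toFinset_nonempty.2 hU)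
  rw [Multiset.mem_toFinset] at hjk
  obtain ⟨i, hi, hi_max⟩ := ((P + U.map Prod.fst).toFinset.filter (· < k)).exists_max_image id
    ⟨j, Finset.mem_filter.2 ⟨by simpa using .inr ⟨k, hjk⟩, h.lt _ hjk⟩⟩
  simp only [Finset.mem_filter, Multiset.mem_toFinset, id] at hi hi_max
  have hk : k ∈ U.map Prod.snd := Multiset.mem_map_of_mem _ hjk
  have hk_min' : ∀ l ∈ U.map Prod.snd, k ≤ l :=
    Multiset.forall_mem_map_iff.2 fun v hv => hk_min v (Multiset.mem_toFinset.2 hv)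
  refine ⟨(i, k), h.mem_of_extremal hk hk_min' hi.1 hi.2 fun j hj hjk => hi_max j ⟨hj, hjk⟩, ?_⟩
  rw [hx] at hi hi_max
  rw [hy] at hk hk_min'
  exact h'.mem_of_extremal hk hk_min' hi.1 hi.2 fun j hj hjk => hi_max j ⟨hj, hjk⟩

theorem eq_of_map_eq (h : IsNormal P U) (h' : IsNormal P' U')
    (hx : P + U.map Prod.fst = P' + U'.map Prod.fst) (hy : U.map Prod.snd = U'.map Prod.snd) :
    P = P' ∧ U = U' := by
  induction U using Multiset.strongInductionOn generalizing U' with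
  | ih U ih =>
    rcases eq_or_ne U 0 with rfl | hU
    · obtain rfl : U' = 0 := by simpa [eq_comm] using hy
      simpa using hx
    obtain ⟨w, hw, hw'⟩ := h.exists_mem_mem_of_map_eq h' hx hy hU
    rw [← Multiset.cons_erase hw, ← Multiset.cons_erase hw'] at hx hy ⊢
    simp only [Multiset.map_cons, Multiset.add_cons, Multiset.cons_inj_right] at hx hy ⊢
    exact ih _ (Multiset.erase_lt.2 hw) (h.mono (Multiset.erase_le _ _))
      (h'.mono (Multiset.erase_le _ _)) hx hy

end IsNormal

lemma Multiset.disjSum_inj {α β : Type*} {s s' : Multiset α} {t t' : Multiset β} :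
    s.disjSum t = s'.disjSum t' ↔ s = s' ∧ t = t' := by
  classical
  refine ⟨fun h => ⟨Multiset.ext.2 fun a => ?_, Multiset.ext.2 fun b => ?_⟩,
    fun h => h.1 ▸ h.2 ▸ rfl⟩
  · simpa [Multiset.disjSum, Multiset.count_map_eq_count' _ _ Sum.inl_injective] using
      congr_arg (Multiset.count (Sum.inl a)) h
  · simpa [Multiset.disjSum, Multiset.count_map_eq_count' _ _ Sum.inr_injective] using
      congr_arg (Multiset.count (Sum.inr b)) h

lemma Finset.toFinsupp_map_val {ι α : Type*} [DecidableEq α] (s : Finset ι) (f : ι → α) :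
    Multiset.toFinsupp (s.val.map f) = ∑ t ∈ s, Finsupp.single (f t) 1 := by
  rw [← Multiset.sum_map_singleton (s.val.map f), map_multiset_sum, Multiset.map_map,
    Multiset.map_map, Finset.sum_eq_multiset_sum]
  simp only [Function.comp_def, Multiset.toFinsupp_singleton]

lemma leadOf_eq_toFinsupp {n c d : ℕ} (idx : Fin c → Fin n) (jk : Fin d → Fin n × Fin n) :
    leadOf idx jk = Multiset.toFinsupp
      ((Finset.univ.val.map idx + (Finset.univ.val.map jk).map Prod.fst).disjSum
        ((Finset.univ.val.map jk).map Prod.snd)) := by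
  classical
  simp only [Multiset.disjSum, Multiset.map_add, Multiset.map_map, map_add,
    Finset.toFinsupp_map_val, leadOf, Finset.sum_add_distrib, Function.comp_apply, add_assoc]

lemma prodOf_congr (K : Type*) [CommRing K] {n c d c' d' : ℕ} {idx : Fin c → Fin n}
    {jk : Fin d → Fin n × Fin n} {idx' : Fin c' → Fin n} {jk' : Fin d' → Fin n × Fin n}
    (hP : Finset.univ.val.map idx = Finset.univ.val.map idx')
    (hU : Finset.univ.val.map jk = Finset.univ.val.map jk') :
    prodOf K idx jk = prodOf K idx' jk' := by
  have h {c d : ℕ} (idx : Fin c → Fin n) (jk : Fin d → Fin n × Fin n) : prodOf K idx jk =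
      ((Finset.univ.val.map idx).map fun i => X (Sum.inl i)).prod *
      ((Finset.univ.val.map jk).map fun u =>
        X (Sum.inl u.1) * X (Sum.inr u.2) - X (Sum.inl u.2) * X (Sum.inr u.1)).prod := by
    simp only [Multiset.map_map]; rfl
  rw [h, h, hP, hU]

theorem leading_monomial_of_normal_product_general {K : Type*} [Field K] (n : ℕ)
    {c d : ℕ} (idx : Fin c → Fin n) (jk : Fin d → Fin n × Fin n)
    (hlt : ∀ p, (jk p).1 < (jk p).2)
    (hint : ∀ p q, ¬((jk p).1 < (jk q).1 ∧ (jk q).1 < (jk p).2 ∧ (jk p).2 < (jk q).2))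
    (hcov : ∀ p t, ¬((jk p).1 < idx t ∧ idx t < (jk p).2))
    {c' d' : ℕ} (idx' : Fin c' → Fin n) (jk' : Fin d' → Fin n × Fin n)
    (hlt' : ∀ p, (jk' p).1 < (jk' p).2)
    (hint' : ∀ p q, ¬((jk' p).1 < (jk' q).1 ∧ (jk' q).1 < (jk' p).2 ∧ (jk' p).2 < (jk' q).2))
    (hcov' : ∀ p t, ¬((jk' p).1 < idx' t ∧ idx' t < (jk' p).2)) :
    leadOf idx jk ∈ (prodOf K idx jk).support ∧
    (∀ e ∈ (prodOf K idx jk).support, e ≠ leadOf idx jk → lexGT (leadOf idx jk) e) ∧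
    (prodOf K idx jk ≠ prodOf K idx' jk' → leadOf idx jk ≠ leadOf idx' jk') := by
  obtain ⟨hmonic, hdeg⟩ := monic_prodOf_and_degree (K := K) idx hlt
  refine ⟨hdeg ▸ (varLex n).degree_mem_support hmonic.ne_zero, fun e he hne => ?_,
    fun hne hlead => hne ?_⟩
  · rw [← varLex_lt_iff, ← hdeg]
    exact lt_of_le_of_ne (le_degree he) ((varLex n).toSyn.injective.ne (hdeg ▸ hne))
  · rw [leadOf_eq_toFinsupp, leadOf_eq_toFinsupp, Multiset.toFinsupp.injective.eq_iff,
      Multiset.disjSum_inj] at hlead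
    obtain ⟨hP, hU⟩ := (IsNormal.of_fintype idx jk hlt hint hcov).eq_of_map_eq
      (IsNormal.of_fintype idx' jk' hlt' hint' hcov') hlead.1 hlead.2
    exact prodOf_congr K hP hU

/-- For a normal product `w = x_{i_1} ⋯ x_{i_c} u_{j_1 k_1} ⋯ u_{j_d k_d}` (no two `u`-factors
intersect each other and no `u`-factor covers an `x_{i_t}`), the leading monomial of `w` with
respect to the lexicographic order on exponent vectors `(a_1, b_1, …, a_n, b_n)` is
`x_{i_1} ⋯ x_{i_c} · x_{j_1} y_{k_1} ⋯ x_{j_d} y_{k_d}`; moreover distinct normal products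
have distinct leading monomials. -/
theorem leading_monomial_of_normal_product {K : Type*} [Field K] [CharZero K] (n : ℕ)
    {c d : ℕ} (idx : Fin c → Fin n) (jk : Fin d → Fin n × Fin n)
    (hlt : ∀ p, (jk p).1 < (jk p).2)
    (hint : ∀ p q, ¬((jk p).1 < (jk q).1 ∧ (jk q).1 < (jk p).2 ∧ (jk p).2 < (jk q).2))
    (hcov : ∀ p t, ¬((jk p).1 < idx t ∧ idx t < (jk p).2))
    {c' d' : ℕ} (idx' : Fin c' → Fin n) (jk' : Fin d' → Fin n × Fin n)
    (hlt' : ∀ p, (jk' p).1 < (jk' p).2)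
    (hint' : ∀ p q, ¬((jk' p).1 < (jk' q).1 ∧ (jk' q).1 < (jk' p).2 ∧ (jk' p).2 < (jk' q).2))
    (hcov' : ∀ p t, ¬((jk' p).1 < idx' t ∧ idx' t < (jk' p).2)) :
    leadOf idx jk ∈ (prodOf K idx jk).support ∧
    (∀ e ∈ (prodOf K idx jk).support, e ≠ leadOf idx jk → lexGT (leadOf idx jk) e) ∧
    (prodOf K idx jk ≠ prodOf K idx' jk' → leadOf idx jk ≠ leadOf idx' jk') :=
  leading_monomial_of_normal_product_general n idx jk hlt hint hcov idx' jk' hlt' hint' hcov'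
end
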